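/- arXiv:2012.09839 — 8 statements merged into one kernel-verified Lean document; each statement's English description precedes it below -/
import Mathlib

section
/- Let d, r be positive integers, let f : ℝ^{d×d} → ℝ be differentiable, let U₀ ∈ ℝ^{d×r}, and let W₀ := U₀U₀ᵀ. Assume the gradient matrix ∇f(W₀) is symmetric. Then the following are equivalent: (1) U₀ is a stationary point of L(U) := (1/2)·f(UUᵀ), i.e. the Fréchet derivative of L at U₀ vanishes (equivalently ∇f(W₀)U₀ = 0); (2) ∇f(W₀)·W₀ = 0; (3) W₀·∇f(W₀) + ∇f(W₀)·W₀ = 0. -/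
open Matrix

attribute [local instance] Matrix.frobeniusNormedAddCommGroup Matrix.frobeniusNormedSpace

/-!
Writing `W = U Uᵀ` and `G = ∇f(W)`, the chain rule and the symmetry of `G` give
`DL(U)[Δ] = ⟨G U, Δ⟩`, so `U` is stationary iff `G U = 0`. Each of the other two conditions is
equivalent to `G U = 0` because it forces `tr ((G U)(G U)ᵀ) = tr (G W G) = 0`: for `G W = 0`
directly, and for `W G + G W = 0` after multiplying by `G` on the left and using that
`tr (G G W) = tr (G W G)`.
-/

namespace Matrix

variable {m n : Type*} [Fintype m] [Fintype n]

section Derivative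

variable {𝕜 : Type*} [NontriviallyNormedField 𝕜] [CompleteSpace 𝕜]

noncomputable def mulTransposeSelfDeriv (U : Matrix m n 𝕜) : Matrix m n 𝕜 →L[𝕜] Matrix m m 𝕜 :=
  (mulLinearMap 𝕜).toContinuousBilinearMap.precompR _ U
      (transposeLinearEquiv m n 𝕜 𝕜).toLinearMap.toContinuousLinearMap +
    (mulLinearMap 𝕜).toContinuousBilinearMap.precompL _ (.id 𝕜 _) Uᵀ

@[simp]
theorem mulTransposeSelfDeriv_apply (U Δ : Matrix m n 𝕜) :
    mulTransposeSelfDeriv U Δ = U * Δᵀ + Δ * Uᵀ := rfl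

theorem hasFDerivAt_mul_transpose_self (U : Matrix m n 𝕜) :
    HasFDerivAt (fun V : Matrix m n 𝕜 => V * Vᵀ) (mulTransposeSelfDeriv U) U :=
  (mulLinearMap 𝕜 : Matrix m n 𝕜 →ₗ[𝕜] Matrix n m 𝕜 →ₗ[𝕜] Matrix m m 𝕜).toContinuousBilinearMap
    |>.hasFDerivAt_of_bilinear (hasFDerivAt_id U)
      (transposeLinearEquiv m n 𝕜 𝕜).toLinearMap.toContinuousLinearMap.hasFDerivAt

end Derivative

theorem IsSymm.trace_mul_transpose_add_mul_transpose {R : Type*} [CommRing R] {G : Matrix m m R}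
    (hG : G.IsSymm) (U Δ : Matrix m n R) :
    (G * (U * Δᵀ + Δ * Uᵀ)ᵀ).trace = 2 * (G * U * Δᵀ).trace := by
  have hswap : (G * (U * Δᵀ)ᵀ).trace = (G * U * Δᵀ).trace := by
    rw [← trace_transpose, transpose_mul, transpose_transpose, hG.eq, trace_mul_cycle,
      Matrix.mul_assoc]
  rw [transpose_add, Matrix.mul_add, trace_add, hswap, transpose_mul, transpose_transpose,
    ← Matrix.mul_assoc]
  ring

theorem trace_mul_transpose_self_eq_zero_iff {A : Matrix m n ℝ} : (A * Aᵀ).trace = 0 ↔ A = 0 := by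
  simpa using trace_mul_conjTranspose_self_eq_zero_iff (A := A)

theorem mul_mul_transpose_self_eq_zero_iff {p : Type*} (A : Matrix m n ℝ) (B : Matrix p m ℝ) :
    B * (A * Aᵀ) = 0 ↔ B * A = 0 := by
  simpa using mul_self_mul_conjTranspose_eq_zero A B

theorem IsSymm.mul_transpose_self_mul_add_mul_eq_zero_iff {G : Matrix m m ℝ} (hG : G.IsSymm)
    (U : Matrix m n ℝ) : U * Uᵀ * G + G * (U * Uᵀ) = 0 ↔ G * U = 0 := by
  have hsquare : G * U * (G * U)ᵀ = G * (U * Uᵀ) * G := by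
    rw [transpose_mul, hG.eq, Matrix.mul_assoc, Matrix.mul_assoc, Matrix.mul_assoc]
  constructor
  · intro h
    have htrace : (G * (U * Uᵀ * G + G * (U * Uᵀ))).trace = 0 := by
      rw [h, Matrix.mul_zero, trace_zero]
    rw [Matrix.mul_add, trace_add, ← Matrix.mul_assoc G (U * Uᵀ) G,
      trace_mul_comm G (G * (U * Uᵀ)), ← hsquare] at htrace
    exact trace_mul_transpose_self_eq_zero_iff.1 (by linarith)
  · intro h
    rw [Matrix.mul_assoc, ← hG.eq, ← transpose_mul, h, ← Matrix.mul_assoc, hG.eq, h]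
    simp

end Matrix

theorem ContinuousLinearMap.eq_zero_iff_of_apply_eq_trace {m n : Type*} [Fintype m] [Fintype n]
    {φ : Matrix m n ℝ →L[ℝ] ℝ} {M : Matrix m n ℝ} (hφ : ∀ Δ, φ Δ = (M * Δᵀ).trace) :
    φ = 0 ↔ M = 0 := by
  refine ⟨fun h => trace_mul_transpose_self_eq_zero_iff.1 ?_, fun h => ?_⟩
  · rw [← hφ, h, _root_.zero_apply]
  · ext Δ
    simp [hφ, h]

theorem fderiv_half_comp_mul_transpose_self_apply {m n : Type*} [Fintype m] [Fintype n]
    {f : Matrix m m ℝ → ℝ} {f' : Matrix m m ℝ →L[ℝ] ℝ} {G : Matrix m m ℝ} {U : Matrix m n ℝ}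
    (hf : HasFDerivAt f f' (U * Uᵀ)) (hf' : ∀ Δ, f' Δ = (G * Δᵀ).trace) (hG : G.IsSymm)
    (Δ : Matrix m n ℝ) :
    fderiv ℝ (fun V : Matrix m n ℝ => (1 / 2 : ℝ) * f (V * Vᵀ)) U Δ = (G * U * Δᵀ).trace := by
  have hL : HasFDerivAt (fun V : Matrix m n ℝ => (1 / 2 : ℝ) * f (V * Vᵀ))
      ((1 / 2 : ℝ) • f'.comp (mulTransposeSelfDeriv U)) U :=
    (hf.comp U (hasFDerivAt_mul_transpose_self U)).const_mul _
  rw [hL.fderiv, _root_.smul_apply, ContinuousLinearMap.comp_apply,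
    mulTransposeSelfDeriv_apply, hf', hG.trace_mul_transpose_add_mul_transpose, smul_eq_mul]
  ring

theorem stmt0_general {d r : ℕ}
    (f : Matrix (Fin d) (Fin d) ℝ → ℝ) (hf : Differentiable ℝ f)
    (U₀ : Matrix (Fin d) (Fin r) ℝ) (W₀ : Matrix (Fin d) (Fin d) ℝ)
    (hW₀ : W₀ = U₀ * U₀ᵀ)
    (G : Matrix (Fin d) (Fin d) ℝ)
    (hG : ∀ Δ : Matrix (Fin d) (Fin d) ℝ, fderiv ℝ f W₀ Δ = (G * Δᵀ).trace)
    (hGsymm : Gᵀ = G) :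
    [ fderiv ℝ (fun U : Matrix (Fin d) (Fin r) ℝ => (1 / 2 : ℝ) * f (U * Uᵀ)) U₀ = 0,
      G * W₀ = 0,
      W₀ * G + G * W₀ = 0 ].TFAE := by
  subst hW₀
  have hstationary :
      fderiv ℝ (fun U : Matrix (Fin d) (Fin r) ℝ => (1 / 2 : ℝ) * f (U * Uᵀ)) U₀ = 0 ↔
        G * U₀ = 0 :=
    ContinuousLinearMap.eq_zero_iff_of_apply_eq_trace
      (fderiv_half_comp_mul_transpose_self_apply (hf _).hasFDerivAt hG hGsymm)
  tfae_have 1 ↔ 2 := hstationary.trans (mul_mul_transpose_self_eq_zero_iff U₀ G).symm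
  tfae_have 3 ↔ 2 := (IsSymm.mul_transpose_self_mul_add_mul_eq_zero_iff hGsymm U₀).trans
    (mul_mul_transpose_self_eq_zero_iff U₀ G).symm
  tfae_finish

/-- For `f : ℝ^{d×d} → ℝ` differentiable with gradient matrix `G` at
`W₀ := U₀ * U₀ᵀ` (i.e. `⟨G, Δ⟩ = Df(W₀)[Δ]` for the Frobenius inner product
`⟨A, B⟩ = tr (A * Bᵀ)`), assuming `G` is symmetric, the following are equivalent:
(1) `U₀` is a stationary point of `L(U) = (1/2) f (U Uᵀ)`;
(2) `G * W₀ = 0`;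
(3) `W₀ * G + G * W₀ = 0`. -/
theorem stmt0 {d r : ℕ} (hd : 0 < d) (hr : 0 < r)
    (f : Matrix (Fin d) (Fin d) ℝ → ℝ) (hf : Differentiable ℝ f)
    (U₀ : Matrix (Fin d) (Fin r) ℝ) (W₀ : Matrix (Fin d) (Fin d) ℝ)
    (hW₀ : W₀ = U₀ * U₀ᵀ)
    (G : Matrix (Fin d) (Fin d) ℝ)
    (hG : ∀ Δ : Matrix (Fin d) (Fin d) ℝ, fderiv ℝ f W₀ Δ = (G * Δᵀ).trace)
    (hGsymm : Gᵀ = G) :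
    [ fderiv ℝ (fun U : Matrix (Fin d) (Fin r) ℝ => (1 / 2 : ℝ) * f (U * Uᵀ)) U₀ = 0,
      G * W₀ = 0,
      W₀ * G + G * W₀ = 0 ].TFAE :=
  stmt0_general f hf U₀ W₀ hW₀ G hG hGsymm
end

section
/- Let f : ℝ^{d×d} → ℝ be convex and differentiable, let U₀ ∈ ℝ^{d×r} be a stationary point of L(U) := (1/2)·f(UUᵀ) (equivalently ∇f(W₀)U₀ = 0, where W₀ := U₀U₀ᵀ), and assume ∇f(W₀) is symmetric. Then W₀ attains the minimum of f over the cone {W ∈ ℝ^{d×d} : W positive semidefinite} if and only if ∇f(W₀) is positive semidefinite. -/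
open Matrix

attribute [local instance] Matrix.frobeniusNormedAddCommGroup Matrix.frobeniusNormedSpace

/-!
Since `f` is convex, `W₀` minimizes `f` over the convex PSD cone exactly when the derivative
at `W₀` is nonnegative in every direction `W - W₀` with `W ⪰ 0`. Stationarity gives
`G W₀ = G U₀ U₀ᵀ = 0`, so that directional derivative is `tr (G W)`. Finally `tr (G W) ≥ 0` for
all `W ⪰ 0` characterises `G ⪰ 0` because the PSD cone is self-dual: it is generated by the
rank-one matrices `x xᴴ`, and `tr (G x xᴴ) = xᴴ G x`.
-/

section FirstOrder

variable {E : Type*} [NormedAddCommGroup E] [NormedSpace ℝ E] {s : Set E} {f : E → ℝ}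
  {f' : E →L[ℝ] ℝ} {x y : E}

theorem ConvexOn.hasFDerivAt_apply_sub_le (hf : ConvexOn ℝ s f) (hx : x ∈ s) (hy : y ∈ s)
    (hf' : HasFDerivAt f f' x) : f' (y - x) ≤ f y - f x := by
  let g : ℝ →ᵃ[ℝ] E := AffineMap.lineMap x y
  have hg : Set.MapsTo g (Set.Icc 0 1) s := by
    simpa only [g, Set.mapsTo_iff_image_subset, ← segment_eq_image_lineMap]
      using hf.1.segment_subset hx hy
  have hconv : ConvexOn ℝ (Set.Icc 0 1) (f ∘ g) :=
    (hf.comp_affineMap g).subset hg (convex_Icc 0 1)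
  have hderiv : HasDerivAt (f ∘ g) (f' (y - x)) 0 := by
    simpa [g] using hf'.comp_hasDerivAt_of_eq (0 : ℝ) AffineMap.hasDerivAt_lineMap (by simp)
  simpa [g, slope_def_field] using
    hconv.le_slope_of_hasDerivAt (by simp) (by simp) zero_lt_one hderiv

theorem ConvexOn.isMinOn_iff_hasFDerivAt_apply_sub_nonneg (hf : ConvexOn ℝ s f) (hx : x ∈ s)
    (hf' : HasFDerivAt f f' x) : IsMinOn f s x ↔ ∀ y ∈ s, 0 ≤ f' (y - x) := by
  refine ⟨fun hmin y hy => ?_, fun h => isMinOn_iff.mpr fun y hy => ?_⟩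
  · exact hmin.localize.hasFDerivWithinAt_nonneg hf'.hasFDerivWithinAt
      (sub_mem_posTangentConeAt_of_segment_subset (hf.1.segment_subset hx hy))
  · linarith [h y hy, hf.hasFDerivAt_apply_sub_le hx hy hf']

end FirstOrder

namespace Matrix

open scoped ComplexOrder

variable {n 𝕜 : Type*} [RCLike 𝕜]

theorem convex_setOf_posSemidef : Convex ℝ {A : Matrix n n 𝕜 | A.PosSemidef} :=
  fun _ hA _ hB _ _ ha hb _ => (hA.smul ha).add (hB.smul hb)

variable [Fintype n]

theorem trace_mul_vecMulVec_star (G : Matrix n n 𝕜) (v : n → 𝕜) :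
    (G * vecMulVec v (star v)).trace = star v ⬝ᵥ G *ᵥ v := by
  rw [mul_vecMulVec, trace_vecMulVec, dotProduct_comm]

theorem PosSemidef.trace_mul_nonneg {G W : Matrix n n 𝕜} (hG : G.PosSemidef)
    (hW : W.PosSemidef) : 0 ≤ (G * W).trace := by
  obtain ⟨m, v, rfl⟩ := posSemidef_iff_eq_sum_vecMulVec.mp hW
  rw [Finset.mul_sum, trace_sum]
  exact Finset.sum_nonneg fun i _ =>
    trace_mul_vecMulVec_star G (v i) ▸ hG.dotProduct_mulVec_nonneg _

theorem IsHermitian.posSemidef_iff_forall_trace_mul_nonneg {G : Matrix n n 𝕜}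
    (hG : G.IsHermitian) :
    G.PosSemidef ↔ ∀ W : Matrix n n 𝕜, W.PosSemidef → 0 ≤ (G * W).trace :=
  ⟨fun hG' _ hW => hG'.trace_mul_nonneg hW, fun h => .of_dotProduct_mulVec_nonneg hG fun x =>
    trace_mul_vecMulVec_star G x ▸ h _ (posSemidef_vecMulVec_self_star x)⟩

end Matrix

/-- Let `f : ℝ^{d×d} → ℝ` be convex and differentiable, let `U₀ ∈ ℝ^{d×r}` be a
stationary point of `L(U) = (1/2) f (U Uᵀ)` (equivalently `∇f(W₀) * U₀ = 0` where `W₀ = U₀U₀ᵀ`),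
with `G = ∇f(W₀)` the gradient matrix (w.r.t. the Frobenius inner product `⟨A,B⟩ = tr (A Bᵀ)`)
assumed symmetric. Then `W₀` minimizes `f` over the PSD cone iff `G` is positive semidefinite. -/
theorem stmt1 {d r : ℕ}
    (f : Matrix (Fin d) (Fin d) ℝ → ℝ) (hf : Differentiable ℝ f)
    (hconv : ConvexOn ℝ Set.univ f)
    (U₀ : Matrix (Fin d) (Fin r) ℝ) (W₀ : Matrix (Fin d) (Fin d) ℝ)
    (hW₀ : W₀ = U₀ * U₀ᵀ)
    (G : Matrix (Fin d) (Fin d) ℝ)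
    (hG : ∀ Δ : Matrix (Fin d) (Fin d) ℝ, fderiv ℝ f W₀ Δ = (G * Δᵀ).trace)
    (hGsymm : Gᵀ = G)
    (hstat : G * U₀ = 0) :
    (∀ W : Matrix (Fin d) (Fin d) ℝ, W.PosSemidef → f W₀ ≤ f W) ↔ G.PosSemidef := by
  have hW₀psd : W₀.PosSemidef := by
    simpa [hW₀] using posSemidef_self_mul_conjTranspose U₀
  have hGW₀ : G * W₀ = 0 := by rw [hW₀, ← Matrix.mul_assoc, hstat, Matrix.zero_mul]
  have hsymm {A : Matrix (Fin d) (Fin d) ℝ} (hA : A.PosSemidef) : Aᵀ = A :=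
    (conjTranspose_eq_transpose_of_trivial A).symm.trans hA.1
  have hdir : ∀ W : Matrix (Fin d) (Fin d) ℝ, W.PosSemidef →
      fderiv ℝ f W₀ (W - W₀) = (G * W).trace := fun W hW => by
    rw [hG, transpose_sub, hsymm hW, hsymm hW₀psd, Matrix.mul_sub, hGW₀, sub_zero]
  have hGherm : G.IsHermitian := by rwa [IsHermitian, conjTranspose_eq_transpose_of_trivial]
  have hmin := (hconv.subset (Set.subset_univ _) convex_setOf_posSemidef)
    |>.isMinOn_iff_hasFDerivAt_apply_sub_nonneg hW₀psd (hf W₀).hasFDerivAt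
  calc (∀ W : Matrix (Fin d) (Fin d) ℝ, W.PosSemidef → f W₀ ≤ f W)
      ↔ IsMinOn f {W | W.PosSemidef} W₀ := isMinOn_iff.symm
    _ ↔ ∀ W ∈ {W : Matrix (Fin d) (Fin d) ℝ | W.PosSemidef}, 0 ≤ fderiv ℝ f W₀ (W - W₀) := hmin
    _ ↔ ∀ W : Matrix (Fin d) (Fin d) ℝ, W.PosSemidef → 0 ≤ (G * W).trace :=
      forall₂_congr fun W hW => by rw [hdir W hW]
    _ ↔ G.PosSemidef := hGherm.posSemidef_iff_forall_trace_mul_nonneg.symm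
end

section
/- Fix a real number R > 1. Let M be any real positive semidefinite 4×4 matrix with M₁₃ = M₃₁ = 1, M₁₄ = M₄₁ = R, and M₂₃ = M₃₂ = R. Then tr(M) ≥ 4R (equivalently, since M is PSD, its nuclear norm is at least 4R). Moreover, tr(M) = 4R holds if and only if M = M_norm, where M_norm is the 4×4 matrix with rows (R, 1, 1, R), (1, R, R, 1), (1, R, R, 1), (R, 1, 1, R). -/
/-!
Testing `M` against `e₁ - e₄` and `e₂ - e₃` gives `M₁₁ + M₄₄ ≥ 2R` and `M₂₂ + M₃₃ ≥ 2R`.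
If the trace is `4R`, both tests vanish, so both vectors lie in the kernel of `M`: columns
1 and 4, and columns 2 and 3, coincide, which together with symmetry determines `M`.
-/

open Matrix

namespace Matrix

variable {n : Type*} [Fintype n] [DecidableEq n]

theorem single_sub_single_dotProduct_mulVec {α : Type*} [CommRing α] (M : Matrix n n α)
    (i j : n) :
    (Pi.single i 1 - Pi.single j 1) ⬝ᵥ M *ᵥ (Pi.single i 1 - Pi.single j 1) =
      M i i + M j j - M i j - M j i := by
  simp only [mulVec_sub, mulVec_single_one, sub_dotProduct, single_one_dotProduct, Pi.sub_apply,
    col_apply]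
  ring

theorem PosSemidef.add_le_add_diag {M : Matrix n n ℝ} (hM : M.PosSemidef) (i j : n) :
    M i j + M j i ≤ M i i + M j j := by
  have := hM.dotProduct_mulVec_nonneg (Pi.single i 1 - Pi.single j 1)
  rw [star_trivial, single_sub_single_dotProduct_mulVec] at this
  linarith

theorem PosSemidef.apply_eq_of_add_eq_add_diag {M : Matrix n n ℝ} (hM : M.PosSemidef)
    {i j : n} (h : M i j + M j i = M i i + M j j) (k : n) : M k i = M k j := by
  have hker : M *ᵥ (Pi.single i 1 - Pi.single j 1) = 0 := by
    rw [← hM.dotProduct_mulVec_zero_iff, star_trivial, single_sub_single_dotProduct_mulVec]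
    linarith
  have := congrFun hker k
  simp only [mulVec_sub, mulVec_single_one, Pi.sub_apply, col_apply, Pi.zero_apply] at this
  linarith

end Matrix

theorem stmt10_general (R : ℝ)
    (M : Matrix (Fin 4) (Fin 4) ℝ) (hM : M.PosSemidef)
    (h13 : M 0 2 = 1) (h31 : M 2 0 = 1)
    (h14 : M 0 3 = R) (h41 : M 3 0 = R)
    (h23 : M 1 2 = R) (h32 : M 2 1 = R) :
    4 * R ≤ M.trace ∧
    (M.trace = 4 * R ↔
      M = !![R, 1, 1, R;
             1, R, R, 1;
             1, R, R, 1;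
             R, 1, 1, R]) := by
  have htr : M.trace = (M 0 0 + M 3 3) + (M 1 1 + M 2 2) := by
    simp only [trace, Fin.sum_univ_four, diag_apply]
    ring
  have h03 := hM.add_le_add_diag 0 3
  have h12 := hM.add_le_add_diag 1 2
  rw [h14, h41] at h03
  rw [h23, h32] at h12
  refine ⟨by linarith, fun htight => ?_, fun hnorm => ?_⟩
  · have c03 := hM.apply_eq_of_add_eq_add_diag (i := 0) (j := 3) (by linarith)
    have c12 := hM.apply_eq_of_add_eq_add_diag (i := 1) (j := 2) (by linarith)
    have hsymm (i j : Fin 4) : M j i = M i j := hM.isHermitian.apply i j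
    ext i j
    fin_cases i <;> fin_cases j <;> simp <;>
      linarith [c03 0, c03 1, c03 2, c03 3, c12 0, c12 1, c12 2, c12 3,
        hsymm 0 1, hsymm 1 3, hsymm 2 3]
  · subst hnorm
    simp [trace, Fin.sum_univ_four]
    ring

/-- Fix `R > 1`.  Any real PSD `4×4` matrix `M` with `M₁₃ = M₃₁ = 1`,
`M₁₄ = M₄₁ = R`, `M₂₃ = M₃₂ = R` (1-indexed; 0-indexed below) satisfies `tr M ≥ 4R`, with
equality iff `M = M_norm`, where `M_norm` has rows `(R,1,1,R), (1,R,R,1), (1,R,R,1),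
(R,1,1,R)`. -/
theorem stmt10 (R : ℝ) (hR : 1 < R)
    (M : Matrix (Fin 4) (Fin 4) ℝ) (hM : M.PosSemidef)
    (h13 : M 0 2 = 1) (h31 : M 2 0 = 1)
    (h14 : M 0 3 = R) (h41 : M 3 0 = R)
    (h23 : M 1 2 = R) (h32 : M 2 1 = R) :
    4 * R ≤ M.trace ∧
    (M.trace = 4 * R ↔
      M = !![R, 1, 1, R;
             1, R, R, 1;
             1, R, R, 1;
             R, 1, 1, R]) :=
  stmt10_general R M hM h13 h31 h14 h41 h23 h32
end

section
/- Let D be a positive integer, let μ₁ > 0 and β > 0, set κ := β/μ₁, and let 0 < R ≤ 1/κ. Define F(x) := log x − log(1 + κx) for x > 0 and T_α(r) := (F(r) − F(α))/μ₁. Let g : ℝ^D → ℝ^D satisfy ⟨θ, g(θ)⟩ ≤ μ₁‖θ‖² + β‖θ‖³ for all θ with ‖θ‖ ≤ R. Let 0 < α ≤ r ≤ R and let θ : [0, T_α(r)] → ℝ^D be differentiable with θ'(t) = g(θ(t)) and ‖θ(0)‖ ≤ α. Then for every t ∈ [0, T_α(r)], ‖θ(t)‖ ≤ ((1 + κr)/(1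 + κα))·α·e^{μ₁t}, and in particular ‖θ(t)‖ ≤ r. -/
/-!
Write `ψ x = x / (1 + κ x)`, so that `F = log ∘ ψ`. Where `‖θ‖ ≤ r`, the hypothesis on `g` reads
`⟪θ, g θ⟫ ≤ μ₁ ‖θ‖² (1 + κ ‖θ‖)`, and since `ψ' = 1 / (1 + κ x)²` it becomes the linear
differential inequality `(ψ ∘ ‖θ‖)' ≤ μ₁ ψ ∘ ‖θ‖`. Comparing with the strict supersolutions
`ψ(α) e^{μ₁ t} + ε e^{2 μ₁ t}`, which stay below `ψ(r)` for small `ε` away from the final time,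
gives `ψ(‖θ t‖) ≤ ψ(α) e^{μ₁ t}`. As `ψ(α) e^{μ₁ T_α(r)} = ψ(r)` and `ψ` is increasing,
`‖θ t‖ ≤ r`, and then `‖θ t‖ = ψ(‖θ t‖) (1 + κ ‖θ t‖) ≤ (1 + κ r) ψ(α) e^{μ₁ t}`.
-/

open Real Set Filter
open scoped Topology RealInnerProductSpace

theorem image_le_of_deriv_right_lt_deriv_boundary_of_contact {f B : ℝ → ℝ} {a b : ℝ}
    (hf : ContinuousOn f (Icc a b)) (hB : ContinuousOn B (Icc a b)) (ha : f a ≤ B a)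
    (contact : ∀ x ∈ Ico a b, f x = B x →
      ∃ f' B', HasDerivWithinAt f f' (Ici x) x ∧ HasDerivWithinAt B B' (Ici x) x ∧ f' < B') :
    ∀ x ∈ Icc a b, f x ≤ B x := by
  have hclosed : IsClosed ({x | f x ≤ B x} ∩ Icc a b) := by
    rw [inter_comm]
    exact isClosed_Icc.isClosed_le hf hB
  refine hclosed.Icc_subset_of_forall_mem_nhdsWithin ha ?_
  rintro x ⟨hfB, hx⟩
  rcases (show f x ≤ B x from hfB).lt_or_eq with hlt | heq
  · have hnear : ∀ᶠ y in 𝓝[Icc a b] x, f y < B y :=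
      (hf x (Ico_subset_Icc_self hx)).eventually_lt (hB x (Ico_subset_Icc_self hx)) hlt
    exact Eventually.mono (nhdsWithin_le_of_mem (Icc_mem_nhdsGT_of_mem hx) hnear)
      fun y hy => hy.le
  · obtain ⟨f', B', hf', hB', hlt⟩ := contact x hx heq
    have hslope : ∀ᶠ z in 𝓝[>] x, slope (fun y => f y - B y) x z < 0 :=
      (hf'.sub hB').Ioi_of_Ici.limsup_slope_le' (lt_irrefl x) (sub_neg.2 hlt)
    filter_upwards [hslope, self_mem_nhdsWithin] with z hz hxz
    rw [slope_def_field, div_lt_iff₀ (sub_pos.2 hxz)] at hz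
    linarith

theorem hasDerivAt_const_mul_exp_mul_sub (A K a x : ℝ) :
    HasDerivAt (fun y => A * exp (K * (y - a))) (K * (A * exp (K * (x - a)))) x :=
  ((((hasDerivAt_id' x).sub_const a).const_mul K).exp.const_mul A).congr_deriv (by ring)

theorem le_mul_exp_add_of_hasDerivWithinAt_le {f : ℝ → ℝ} {a b A K M ε : ℝ} (hK : 0 < K)
    (hA : 0 < A) (hε : 0 < ε) (hf : ContinuousOn f (Icc a b)) (ha : f a ≤ A)
    (hM : A * exp (K * (b - a)) + ε * exp (2 * K * (b - a)) ≤ M)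
    (hf' : ∀ x ∈ Ico a b, 0 < f x → f x ≤ M →
      ∃ f', HasDerivWithinAt f f' (Ici x) x ∧ f' ≤ K * f x) :
    ∀ x ∈ Icc a b, f x ≤ A * exp (K * (x - a)) + ε * exp (2 * K * (x - a)) := by
  refine image_le_of_deriv_right_lt_deriv_boundary_of_contact hf (by fun_prop)
    (by simp only [sub_self, mul_zero, exp_zero, mul_one]; linarith) fun x hx hfx => ?_
  have hBpos : 0 < A * exp (K * (x - a)) + ε * exp (2 * K * (x - a)) := by positivity
  have hBM : A * exp (K * (x - a)) + ε * exp (2 * K * (x - a)) ≤ M := by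
    refine le_trans (add_le_add ?_ ?_) hM <;> gcongr <;> linarith [hx.2]
  obtain ⟨f', hf'x, hf'le⟩ := hf' x hx (hfx ▸ hBpos) (hfx ▸ hBM)
  refine ⟨f', _, hf'x, ((hasDerivAt_const_mul_exp_mul_sub A K a x).add
    (hasDerivAt_const_mul_exp_mul_sub ε (2 * K) a x)).hasDerivWithinAt, ?_⟩
  rw [hfx] at hf'le
  have : 0 < K * (ε * exp (2 * K * (x - a))) := by positivity
  linarith

theorem le_mul_exp_of_hasDerivWithinAt_le {f : ℝ → ℝ} {a b A K M : ℝ} (hK : 0 < K)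
    (hA : 0 < A) (hf : ContinuousOn f (Icc a b)) (ha : f a ≤ A)
    (hM : A * exp (K * (b - a)) ≤ M)
    (hf' : ∀ x ∈ Ico a b, 0 < f x → f x ≤ M →
      ∃ f', HasDerivWithinAt f f' (Ici x) x ∧ f' ≤ K * f x) :
    ∀ x ∈ Icc a b, f x ≤ A * exp (K * (x - a)) := by
  have hIco : ∀ x ∈ Ico a b, f x ≤ A * exp (K * (x - a)) := by
    intro x hx
    set C := exp (2 * K * (x - a))
    have hslack : 0 < (M - A * exp (K * (x - a))) / C := by
      refine div_pos (sub_pos.2 (lt_of_lt_of_le ?_ hM)) (exp_pos _)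
      gcongr
      linarith [hx.2]
    have hperturbed : ∀ ε ∈ Ioo 0 ((M - A * exp (K * (x - a))) / C),
        f x ≤ A * exp (K * (x - a)) + ε * C := by
      rintro ε ⟨hε, hεM⟩
      refine le_mul_exp_add_of_hasDerivWithinAt_le hK hA hε
        (hf.mono (Icc_subset_Icc_right hx.2.le)) ha ?_
        (fun y hy => hf' y ⟨hy.1, hy.2.trans hx.2⟩) x (right_mem_Icc.2 hx.1)
      rw [lt_div_iff₀ (exp_pos _)] at hεM
      linarith
    have hlim : Tendsto (fun ε => A * exp (K * (x - a)) + ε * C) (𝓝[>] 0)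
        (𝓝 (A * exp (K * (x - a)))) := by
      have h : Continuous (fun ε => A * exp (K * (x - a)) + ε * C) := by fun_prop
      simpa using (h.tendsto 0).mono_left nhdsWithin_le_nhds
    exact ge_of_tendsto hlim (eventually_of_mem (Ioo_mem_nhdsGT hslack) hperturbed)
  rintro x ⟨hax, hxb⟩
  rcases eq_or_ne a b with rfl | hab
  · simpa [le_antisymm hxb hax] using ha
  · rw [← closure_Ico hab] at hf
    exact le_on_closure hIco hf (by fun_prop) (by rw [closure_Ico hab]; exact ⟨hax, hxb⟩)

theorem HasDerivWithinAt.norm_of_ne_zero {F : Type*} [NormedAddCommGroup F]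
    [InnerProductSpace ℝ F] {f : ℝ → F} {f' : F} {s : Set ℝ} {x : ℝ}
    (hf : HasDerivWithinAt f f' s x) (h0 : f x ≠ 0) :
    HasDerivWithinAt (fun y => ‖f y‖) (⟪f x, f'⟫ / ‖f x‖) s x := by
  have hsqrt := hf.norm_sq.sqrt (by positivity)
  simp only [sqrt_sq (norm_nonneg _)] at hsqrt
  convert hsqrt using 1
  field_simp

theorem HasDerivWithinAt.div_one_add_const_mul {u : ℝ → ℝ} {u' κ : ℝ} {s : Set ℝ} {x : ℝ}
    (hu : HasDerivWithinAt u u' s x) (h : 1 + κ * u x ≠ 0) :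
    HasDerivWithinAt (fun y => u y / (1 + κ * u y)) (u' / (1 + κ * u x) ^ 2) s x :=
  (hu.div ((hu.const_mul κ).const_add 1) h).congr_deriv (by field_simp; ring)

theorem div_one_add_mul_le_div_one_add_mul_iff {κ x y : ℝ} (hκ : 0 ≤ κ) (hx : 0 ≤ x)
    (hy : 0 ≤ y) : x / (1 + κ * x) ≤ y / (1 + κ * y) ↔ x ≤ y := by
  rw [div_le_div_iff₀ (by positivity) (by positivity)]
  constructor <;> intro h <;> nlinarith

theorem div_one_add_mul_norm_le_of_inner_le {E : Type*} [NormedAddCommGroup E]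
    [InnerProductSpace ℝ E] {g : E → E} {μ κ r : ℝ} (hμ : 0 < μ) (hκ : 0 ≤ κ) (hr : 0 ≤ r)
    (hg : ∀ x : E, ‖x‖ ≤ r → ⟪x, g x⟫ ≤ μ * ‖x‖ ^ 2 * (1 + κ * ‖x‖))
    {θ : ℝ → E} {α T : ℝ} (hα : 0 < α)
    (hθ : ∀ t ∈ Icc 0 T, HasDerivWithinAt θ (g (θ t)) (Icc 0 T) t) (hθ0 : ‖θ 0‖ ≤ α)
    (hT : α / (1 + κ * α) * exp (μ * T) ≤ r / (1 + κ * r)) :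
    ∀ t ∈ Icc 0 T, ‖θ t‖ / (1 + κ * ‖θ t‖) ≤ α / (1 + κ * α) * exp (μ * t) := by
  have hθc : ContinuousOn θ (Icc 0 T) := fun t ht => (hθ t ht).continuousWithinAt
  have hfc : ContinuousOn (fun t => ‖θ t‖ / (1 + κ * ‖θ t‖)) (Icc 0 T) :=
    hθc.norm.div (by fun_prop) fun t _ => by positivity
  have hslope : ∀ x ∈ Ico 0 T, 0 < ‖θ x‖ / (1 + κ * ‖θ x‖) →
      ‖θ x‖ / (1 + κ * ‖θ x‖) ≤ r / (1 + κ * r) →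
      ∃ f', HasDerivWithinAt (fun t => ‖θ t‖ / (1 + κ * ‖θ t‖)) f' (Ici x) x ∧
        f' ≤ μ * (‖θ x‖ / (1 + κ * ‖θ x‖)) := by
    intro x hx hpos hle
    have hx0 : θ x ≠ 0 := by
      rintro h
      simp [h] at hpos
    have hn : 0 < ‖θ x‖ := norm_pos_iff.2 hx0
    have hxr : ‖θ x‖ ≤ r := (div_one_add_mul_le_div_one_add_mul_iff hκ hn.le hr).1 hle
    have hθx : HasDerivWithinAt θ (g (θ x)) (Ici x) x :=
      (hθ x (Ico_subset_Icc_self hx)).mono_of_mem_nhdsWithin (Icc_mem_nhdsGE_of_mem hx)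
    refine ⟨_, (hθx.norm_of_ne_zero hx0).div_one_add_const_mul (κ := κ) (by positivity), ?_⟩
    rw [div_le_iff₀ (by positivity), div_le_iff₀ hn]
    calc ⟪θ x, g (θ x)⟫ ≤ μ * ‖θ x‖ ^ 2 * (1 + κ * ‖θ x‖) := hg _ hxr
      _ = μ * (‖θ x‖ / (1 + κ * ‖θ x‖)) * (1 + κ * ‖θ x‖) ^ 2 * ‖θ x‖ := by field_simp
  simpa using le_mul_exp_of_hasDerivWithinAt_le hμ (by positivity) hfc
    ((div_one_add_mul_le_div_one_add_mul_iff hκ (norm_nonneg _) hα.le).2 hθ0)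
    (by simpa using hT) hslope

theorem div_one_add_mul_mul_exp_log_sub_log {κ μ α r : ℝ} (hμ : μ ≠ 0) (hκ : 0 ≤ κ)
    (hα : 0 < α) (hr : 0 < r) :
    α / (1 + κ * α) *
        exp (μ * (((log r - log (1 + κ * r)) - (log α - log (1 + κ * α))) / μ)) =
      r / (1 + κ * r) := by
  rw [mul_div_cancel₀ _ hμ, exp_sub, exp_sub, exp_sub, exp_log hr, exp_log (by positivity),
    exp_log hα, exp_log (by positivity)]
  field_simp

theorem stmt14_general {D : ℕ} (μ₁ β : ℝ) (hμ₁ : 0 < μ₁) (hβ : 0 < β)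
    (R : ℝ)
    (g : EuclideanSpace ℝ (Fin D) → EuclideanSpace ℝ (Fin D))
    (hg : ∀ x : EuclideanSpace ℝ (Fin D), ‖x‖ ≤ R →
      (inner ℝ x (g x) : ℝ) ≤ μ₁ * ‖x‖ ^ 2 + β * ‖x‖ ^ 3)
    (α r : ℝ) (hα : 0 < α) (hαr : α ≤ r) (hrR : r ≤ R)
    (θ : ℝ → EuclideanSpace ℝ (Fin D))
    (hθ : ∀ t ∈ Set.Icc (0 : ℝ)
        (((Real.log r - Real.log (1 + (β / μ₁) * r)) -
          (Real.log α - Real.log (1 + (β / μ₁) * α))) / μ₁),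
      HasDerivWithinAt θ (g (θ t))
        (Set.Icc (0 : ℝ)
          (((Real.log r - Real.log (1 + (β / μ₁) * r)) -
            (Real.log α - Real.log (1 + (β / μ₁) * α))) / μ₁)) t)
    (hθ0 : ‖θ 0‖ ≤ α) :
    ∀ t ∈ Set.Icc (0 : ℝ)
        (((Real.log r - Real.log (1 + (β / μ₁) * r)) -
          (Real.log α - Real.log (1 + (β / μ₁) * α))) / μ₁),
      ‖θ t‖ ≤ ((1 + (β / μ₁) * r) / (1 + (β / μ₁) * α)) * α * Real.exp (μ₁ * t) ∧
      ‖θ t‖ ≤ r := by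
  set κ := β / μ₁ with hκ_def
  have hκ : 0 ≤ κ := by positivity
  have hr : 0 < r := hα.trans_le hαr
  have hT := div_one_add_mul_mul_exp_log_sub_log hμ₁.ne' hκ hα hr
  have hg' : ∀ x : EuclideanSpace ℝ (Fin D), ‖x‖ ≤ r →
      ⟪x, g x⟫ ≤ μ₁ * ‖x‖ ^ 2 * (1 + κ * ‖x‖) := fun x hx =>
    (hg x (hx.trans hrR)).trans_eq (by rw [hκ_def]; field_simp)
  have hbound := div_one_add_mul_norm_le_of_inner_le hμ₁ hκ hr.le hg' hα hθ hθ0 hT.le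
  intro t ht
  have hψ : ‖θ t‖ / (1 + κ * ‖θ t‖) ≤ r / (1 + κ * r) := by
    refine (hbound t ht).trans (hT ▸ ?_)
    gcongr
    exact ht.2
  have hnr : ‖θ t‖ ≤ r := (div_one_add_mul_le_div_one_add_mul_iff hκ (norm_nonneg _) hr.le).1 hψ
  refine ⟨?_, hnr⟩
  calc ‖θ t‖ = ‖θ t‖ / (1 + κ * ‖θ t‖) * (1 + κ * ‖θ t‖) := by field_simp
    _ ≤ α / (1 + κ * α) * exp (μ₁ * t) * (1 + κ * r) := by gcongr; exact hbound t ht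
    _ = (1 + κ * r) / (1 + κ * α) * α * exp (μ₁ * t) := by ring

/-- Norm-growth lemma: with `κ = β/μ₁`, `0 < R ≤ 1/κ`,
`F(x) = log x − log(1 + κx)`, `T_α(r) = (F(r) − F(α))/μ₁`, if
`⟨θ, g(θ)⟩ ≤ μ₁‖θ‖² + β‖θ‖³` for `‖θ‖ ≤ R`, `0 < α ≤ r ≤ R`, and `θ` solves `θ' = g(θ)` on
`[0, T_α(r)]` with `‖θ(0)‖ ≤ α`, then
`‖θ(t)‖ ≤ ((1+κr)/(1+κα)) α e^{μ₁ t} ≤ r` on that interval. -/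
theorem stmt14 {D : ℕ} (μ₁ β : ℝ) (hμ₁ : 0 < μ₁) (hβ : 0 < β)
    (R : ℝ) (hR0 : 0 < R) (hR : R ≤ 1 / (β / μ₁))
    (g : EuclideanSpace ℝ (Fin D) → EuclideanSpace ℝ (Fin D))
    (hg : ∀ x : EuclideanSpace ℝ (Fin D), ‖x‖ ≤ R →
      (inner ℝ x (g x) : ℝ) ≤ μ₁ * ‖x‖ ^ 2 + β * ‖x‖ ^ 3)
    (α r : ℝ) (hα : 0 < α) (hαr : α ≤ r) (hrR : r ≤ R)
    (θ : ℝ → EuclideanSpace ℝ (Fin D))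
    (hθ : ∀ t ∈ Set.Icc (0 : ℝ)
        (((Real.log r - Real.log (1 + (β / μ₁) * r)) -
          (Real.log α - Real.log (1 + (β / μ₁) * α))) / μ₁),
      HasDerivWithinAt θ (g (θ t))
        (Set.Icc (0 : ℝ)
          (((Real.log r - Real.log (1 + (β / μ₁) * r)) -
            (Real.log α - Real.log (1 + (β / μ₁) * α))) / μ₁)) t)
    (hθ0 : ‖θ 0‖ ≤ α) :
    ∀ t ∈ Set.Icc (0 : ℝ)
        (((Real.log r - Real.log (1 + (β / μ₁) * r)) -
          (Real.log α - Real.log (1 + (β / μ₁) * α))) / μ₁),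
      ‖θ t‖ ≤ ((1 + (β / μ₁) * r) / (1 + (β / μ₁) * α)) * α * Real.exp (μ₁ * t) ∧
      ‖θ t‖ ≤ r :=
  stmt14_general μ₁ β hμ₁ hβ R g hg α r hα hαr hrR θ hθ hθ0
end

section
/- Let D be a positive integer, let μ₁ > 0 and β > 0, set κ := β/μ₁, and let 0 < R ≤ 1/κ. Define F(x) := log x − log(1 + κx) and T_α(r) := (F(r) − F(α))/μ₁. Let g : ℝ^D → ℝ^D be C¹-smooth with g(0) = 0 and Jacobian J, and suppose ‖J(θ) − J(θ + h)‖ ≤ β‖h‖ (operator norm) whenever ‖θ‖ ≤ R and ‖θ + h‖ ≤ R, and that ⟨h, J(0)h⟩ ≤ μ₁‖h‖² for all h ∈ ℝ^D. Let 0 < α ≤ r ≤ R and let θ, θ̂ : [0, T_α(r)] → ℝ^D be differentiable with θ' = g∘θ, θ̂' = g∘θ̂, and max{‖θ(0)‖, ‖θ̂(0)‖} ≤ α. Then for every t ∈ [0, T_α(r)], ‖θ(t) − θ̂(t)‖ ≤ e^{μ₁t + κr}·‖θ(0) − θ̂(0)‖. -/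
/-!
Let `ρ` solve the Bernoulli equation `ρ' = (μ₁ + β ρ) ρ`, `ρ 0 = α`. Its reciprocal solves the
linear equation `w' = -(μ₁ w + β)`, so it is explicit, and `T_α(r)` is exactly the time at which
`ρ` reaches `r`. The Lipschitz bound on the Jacobian makes `g` one-sided Lipschitz with constant
`μ₁ + β ρ` on the ball of radius `ρ ≤ R`. A barrier argument for `‖θ‖² w²` keeps both trajectories
in the ball of radius `ρ t`; there `‖θ - θ̂‖² w²` is nonincreasing, whence
`‖θ t - θ̂ t‖ ≤ (ρ t / α) ‖θ 0 - θ̂ 0‖`, and `ρ t / α ≤ e^{μ₁ t} (1 + κ r) ≤ e^{μ₁ t + κ r}`.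
-/

open Real Set Filter Topology
open scoped RealInnerProductSpace

section OneSidedLipschitz

variable {E : Type*} [NormedAddCommGroup E] [InnerProductSpace ℝ E] {g : E → E} {μ β R : ℝ}

theorem inner_fderiv_apply_le (hβ : 0 ≤ β)
    (hJlip : ∀ x h : E, ‖x‖ ≤ R → ‖x + h‖ ≤ R → ‖fderiv ℝ g x - fderiv ℝ g (x + h)‖ ≤ β * ‖h‖)
    (hJ0 : ∀ h : E, ⟪h, fderiv ℝ g 0 h⟫ ≤ μ * ‖h‖ ^ 2)
    {z : E} {ρ : ℝ} (hz : ‖z‖ ≤ ρ) (hρR : ρ ≤ R) (h : E) :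
    ⟪h, fderiv ℝ g z h⟫ ≤ (μ + β * ρ) * ‖h‖ ^ 2 := by
  have hJ : ‖fderiv ℝ g z - fderiv ℝ g 0‖ ≤ β * ρ := by
    have hzR := hz.trans hρR
    rw [norm_sub_rev]
    simpa using (hJlip 0 z (by simpa using (norm_nonneg z).trans hzR) (by simpa using hzR)).trans
      (by gcongr)
  have hdev : ⟪h, (fderiv ℝ g z - fderiv ℝ g 0) h⟫ ≤ β * ρ * ‖h‖ ^ 2 := calc
    _ ≤ ‖h‖ * ‖(fderiv ℝ g z - fderiv ℝ g 0) h‖ := real_inner_le_norm _ _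
    _ ≤ ‖h‖ * (β * ρ * ‖h‖) := by
      gcongr; exact ((fderiv ℝ g z - fderiv ℝ g 0).le_opNorm h).trans (by gcongr)
    _ = β * ρ * ‖h‖ ^ 2 := by ring
  rw [sub_apply, inner_sub_right] at hdev
  linarith [hJ0 h]

theorem inner_sub_map_sub_le (hg : Differentiable ℝ g) (hβ : 0 ≤ β)
    (hJlip : ∀ x h : E, ‖x‖ ≤ R → ‖x + h‖ ≤ R → ‖fderiv ℝ g x - fderiv ℝ g (x + h)‖ ≤ β * ‖h‖)
    (hJ0 : ∀ h : E, ⟪h, fderiv ℝ g 0 h⟫ ≤ μ * ‖h‖ ^ 2)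
    {x y : E} {ρ : ℝ} (hx : ‖x‖ ≤ ρ) (hy : ‖y‖ ≤ ρ) (hρR : ρ ≤ R) :
    ⟪x - y, g x - g y⟫ ≤ (μ + β * ρ) * ‖x - y‖ ^ 2 := by
  set φ : ℝ → ℝ := fun s => ⟪x - y, g (y + s • (x - y))⟫
  have hφ : ∀ s, HasDerivAt φ ⟪x - y, fderiv ℝ g (y + s • (x - y)) (x - y)⟫ s := by
    intro s
    have hpath : HasDerivAt (fun s : ℝ => y + s • (x - y)) (x - y) s := by
      simpa using ((hasDerivAt_id s).smul_const (x - y)).const_add y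
    simpa using (hasDerivAt_const s (x - y)).inner ℝ ((hg _).hasFDerivAt.comp_hasDerivAt s hpath)
  obtain ⟨c, hc, hφc⟩ := exists_hasDerivAt_eq_slope φ _ zero_lt_one
    (fun s _ => (hφ s).continuousAt.continuousWithinAt) (fun s _ => hφ s)
  have hmem : y + c • (x - y) ∈ Metric.closedBall (0 : E) ρ :=
    (convex_closedBall 0 ρ).add_smul_sub_mem (by simpa using hy) (by simpa using hx)
      (Ioo_subset_Icc_self hc)
  have hbound := inner_fderiv_apply_le hβ hJlip hJ0 (by simpa using hmem) hρR (x - y)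
  simp only [φ, one_smul, zero_smul, add_zero, add_sub_cancel, sub_zero, div_one] at hφc
  rw [inner_sub_right, ← hφc]
  exact hbound

theorem mul_inner_sub_map_sub_le
    (hg : ∀ ⦃x y : E⦄ ⦃ρ : ℝ⦄, ‖x‖ ≤ ρ → ‖y‖ ≤ ρ → ρ ≤ R →
      ⟪x - y, g x - g y⟫ ≤ (μ + β * ρ) * ‖x - y‖ ^ 2)
    (hR : 0 < R) {x y : E} {w : ℝ} (hw : R⁻¹ ≤ w) (hx : ‖x‖ * w ≤ 1) (hy : ‖y‖ * w ≤ 1) :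
    w * ⟪x - y, g x - g y⟫ ≤ (μ * w + β) * ‖x - y‖ ^ 2 := by
  have hw0 : 0 < w := (inv_pos.2 hR).trans_le hw
  have hball : ∀ z : E, ‖z‖ * w ≤ 1 → ‖z‖ ≤ w⁻¹ := fun z hz => by
    rwa [← one_div, le_div_iff₀ hw0]
  have := hg (hball x hx) (hball y hy) (inv_le_of_inv_le₀ hR hw)
  calc w * ⟪x - y, g x - g y⟫ ≤ w * ((μ + β * w⁻¹) * ‖x - y‖ ^ 2) := by gcongr
    _ = (μ * w + β) * ‖x - y‖ ^ 2 := by field_simp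

end OneSidedLipschitz

/-- `(bernoulliRecip μ β α t)⁻¹` solves `ρ' = (μ + β ρ) ρ`, `ρ 0 = α`, while it stays positive. -/
noncomputable def bernoulliRecip (μ β α t : ℝ) : ℝ := (α⁻¹ + β / μ) * exp (-(μ * t)) - β / μ

section Bernoulli

variable {μ β α t : ℝ}

@[simp]
theorem bernoulliRecip_zero : bernoulliRecip μ β α 0 = α⁻¹ := by
  simp [bernoulliRecip]

theorem hasDerivAt_bernoulliRecip (hμ : μ ≠ 0) :
    HasDerivAt (bernoulliRecip μ β α) (-(μ * bernoulliRecip μ β α t + β)) t := by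
  have hlin : HasDerivAt (fun s => -(μ * s)) (-μ) t := by
    simpa using (hasDerivAt_id t).const_mul (-μ)
  refine ((hlin.exp.const_mul (α⁻¹ + β / μ)).sub_const (β / μ)).congr_deriv ?_
  unfold bernoulliRecip
  field_simp
  ring

theorem strictAnti_bernoulliRecip (hμ : 0 < μ) (hα : 0 < α) (hβ : 0 ≤ β) :
    StrictAnti (bernoulliRecip μ β α) := by
  intro s t hst
  have : 0 < α⁻¹ + β / μ := by positivity
  simp only [bernoulliRecip]
  gcongr

theorem bernoulliRecip_log_div {r : ℝ} (hμ : 0 < μ) (hβ : 0 ≤ β) (hα : 0 < α) (hr : 0 < r) :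
    bernoulliRecip μ β α (((log r - log (1 + β / μ * r)) - (log α - log (1 + β / μ * α))) / μ)
      = r⁻¹ := by
  have h1r : 0 < 1 + β / μ * r := by positivity
  have h1α : 0 < 1 + β / μ * α := by positivity
  have hexp : exp (-(μ * (((log r - log (1 + β / μ * r)) - (log α - log (1 + β / μ * α))) / μ)))
      = α * (1 + β / μ * r) / (r * (1 + β / μ * α)) := by
    rw [mul_div_cancel₀ _ hμ.ne', exp_neg, exp_sub, exp_sub, exp_sub, exp_log hr, exp_log hα,
      exp_log h1r, exp_log h1α]
    field_simp
  rw [bernoulliRecip, hexp]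
  field_simp
  ring

theorem inv_mul_bernoulliRecip_le_exp {r : ℝ} (hμ : 0 < μ) (hβ : 0 ≤ β) (hr : 0 < r)
    (hw : r⁻¹ ≤ bernoulliRecip μ β α t) :
    (α * bernoulliRecip μ β α t)⁻¹ ≤ exp (μ * t + β / μ * r) := by
  set w := bernoulliRecip μ β α t
  have hw0 : 0 < w := (inv_pos.2 hr).trans_le hw
  have hwr : w⁻¹ ≤ r := inv_le_of_inv_le₀ hr hw
  have hid : α⁻¹ + β / μ = (w + β / μ) * exp (μ * t) := by
    simp only [w, bernoulliRecip, add_mul, sub_mul, mul_assoc, ← exp_add]; simp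
  calc (α * w)⁻¹ = α⁻¹ * w⁻¹ := mul_inv α w
    _ ≤ (α⁻¹ + β / μ) * w⁻¹ := by gcongr; exact le_add_of_nonneg_right (by positivity)
    _ = (1 + β / μ * w⁻¹) * exp (μ * t) := by rw [hid]; field_simp
    _ ≤ (1 + β / μ * r) * exp (μ * t) := by gcongr
    _ ≤ exp (β / μ * r) * exp (μ * t) := by gcongr; linarith [add_one_le_exp (β / μ * r)]
    _ = exp (μ * t + β / μ * r) := by rw [← exp_add, add_comm]

end Bernoulli

theorem le_of_hasDerivWithinAt_Icc_of_deriv_neg {f f' : ℝ → ℝ} {a b C : ℝ}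
    (hf : ∀ x ∈ Icc a b, HasDerivWithinAt f (f' x) (Icc a b) x) (ha : f a ≤ C)
    (hneg : ∀ x ∈ Ico a b, f x = C → f' x < 0) : ∀ x ∈ Icc a b, f x ≤ C :=
  image_le_of_deriv_right_lt_deriv_boundary' (B := fun _ => C) (B' := 0)
    (fun x hx => (hf x hx).continuousWithinAt)
    (fun x hx => (hf x (Ico_subset_Icc_self hx)).mono_of_mem_nhdsWithin (Icc_mem_nhdsGE_of_mem hx))
    ha continuousOn_const (fun _ _ => hasDerivWithinAt_const _ _ _) hneg

section Trajectories

variable {E : Type*} [NormedAddCommGroup E] [InnerProductSpace ℝ E]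
  {g : E → E} {μ β R α T : ℝ}

theorem HasDerivWithinAt.norm_sq_mul_bernoulliRecip_sq (hμ : μ ≠ 0) {γ : ℝ → E} {v : E}
    {s : Set ℝ} {t : ℝ} (hγ : HasDerivWithinAt γ v s t) :
    HasDerivWithinAt (fun t => ‖γ t‖ ^ 2 * bernoulliRecip μ β α t ^ 2)
      (2 * bernoulliRecip μ β α t * (bernoulliRecip μ β α t * ⟪γ t, v⟫
        - (μ * bernoulliRecip μ β α t + β) * ‖γ t‖ ^ 2)) s t :=
  (hγ.norm_sq.mul ((hasDerivAt_bernoulliRecip hμ).hasDerivWithinAt.pow 2)).congr_deriv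
    (by simp only [Pi.pow_apply]; ring)

theorem norm_mul_bernoulliRecip_le_one_of_lt
    (hg : ∀ ⦃x y : E⦄ ⦃ρ : ℝ⦄, ‖x‖ ≤ ρ → ‖y‖ ≤ ρ → ρ ≤ R →
      ⟪x - y, g x - g y⟫ ≤ (μ + β * ρ) * ‖x - y‖ ^ 2)
    (hg0 : g 0 = 0) (hβ : 0 ≤ β) (hR : 0 < R) (hμ : 0 < μ) (hα : 0 < α)
    {θ : ℝ → E} (hθ : ∀ t ∈ Icc 0 T, HasDerivWithinAt θ (g (θ t)) (Icc 0 T) t)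
    (hθ0 : ‖θ 0‖ ≤ α) {β' t : ℝ} (hββ' : β < β') (ht : t ∈ Icc 0 T)
    (hRt : R⁻¹ ≤ bernoulliRecip μ β' α t) :
    ‖θ t‖ * bernoulliRecip μ β' α t ≤ 1 := by
  set w := bernoulliRecip μ β' α
  have hw : ∀ x ∈ Icc 0 t, R⁻¹ ≤ w x := fun x hx =>
    hRt.trans ((strictAnti_bernoulliRecip hμ hα (hβ.trans hββ'.le)).antitone hx.2)
  have hsq : ‖θ t‖ ^ 2 * w t ^ 2 ≤ 1 := by
    refine le_of_hasDerivWithinAt_Icc_of_deriv_neg (fun x hx =>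
      ((hθ x ⟨hx.1, hx.2.trans ht.2⟩).mono (Icc_subset_Icc_right ht.2))
        |>.norm_sq_mul_bernoulliRecip_sq hμ.ne') ?_ ?_ t (right_mem_Icc.2 ht.1)
    · rw [bernoulliRecip_zero, ← mul_pow]
      exact pow_le_one₀ (by positivity) (mul_inv_le_one_of_le₀ hθ0 hα.le)
    · -- `β < β'` makes the barrier `‖θ‖ w = 1` strictly repelling.
      intro x hx hcontact
      have hwx := hw x (Ico_subset_Icc_self hx)
      have hw0 : 0 < w x := (inv_pos.2 hR).trans_le hwx
      have hθx : ‖θ x‖ * w x = 1 := by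
        rw [← mul_pow] at hcontact
        exact (pow_eq_one_iff_of_nonneg (by positivity) two_ne_zero).1 hcontact
      have hone := mul_inner_sub_map_sub_le hg hR hwx hθx.le (by simp) (y := 0)
      rw [hg0, sub_zero, sub_zero] at hone
      have hθpos : 0 < ‖θ x‖ := pos_of_mul_pos_left (hθx ▸ one_pos) hw0.le
      have : 0 < (β' - β) * ‖θ x‖ ^ 2 := by nlinarith
      nlinarith
  rw [← mul_pow] at hsq
  exact (pow_le_one_iff_of_nonneg
    (mul_nonneg (norm_nonneg _) ((inv_pos.2 hR).le.trans hRt)) two_ne_zero).1 hsq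

theorem norm_mul_bernoulliRecip_le_one
    (hg : ∀ ⦃x y : E⦄ ⦃ρ : ℝ⦄, ‖x‖ ≤ ρ → ‖y‖ ≤ ρ → ρ ≤ R →
      ⟪x - y, g x - g y⟫ ≤ (μ + β * ρ) * ‖x - y‖ ^ 2)
    (hg0 : g 0 = 0) (hβ : 0 ≤ β) (hR : 0 < R) (hμ : 0 < μ) (hα : 0 < α)
    {θ : ℝ → E} (hθ : ∀ t ∈ Icc 0 T, HasDerivWithinAt θ (g (θ t)) (Icc 0 T) t)
    (hθ0 : ‖θ 0‖ ≤ α) {t : ℝ} (ht : t ∈ Icc 0 T) (hRt : R⁻¹ < bernoulliRecip μ β α t) :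
    ‖θ t‖ * bernoulliRecip μ β α t ≤ 1 := by
  have hcont : Continuous fun β' => bernoulliRecip μ β' α t := by
    unfold bernoulliRecip; fun_prop
  have hlim := (hcont.tendsto β).mono_left (nhdsWithin_le_nhds (s := Ioi β))
  refine le_of_tendsto ((tendsto_const_nhds (x := ‖θ t‖)).mul hlim) ?_
  filter_upwards [hlim.eventually (lt_mem_nhds hRt), self_mem_nhdsWithin] with β' hRβ' hββ'
  exact norm_mul_bernoulliRecip_le_one_of_lt hg hg0 hβ hR hμ hα hθ hθ0 hββ' ht hRβ'.le

theorem norm_sub_le_inv_mul_bernoulliRecip_mul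
    (hg : ∀ ⦃x y : E⦄ ⦃ρ : ℝ⦄, ‖x‖ ≤ ρ → ‖y‖ ≤ ρ → ρ ≤ R →
      ⟪x - y, g x - g y⟫ ≤ (μ + β * ρ) * ‖x - y‖ ^ 2)
    (hg0 : g 0 = 0) (hβ : 0 ≤ β) (hR : 0 < R) (hμ : 0 < μ) (hα : 0 < α)
    {θ θ' : ℝ → E} (hθ : ∀ t ∈ Icc 0 T, HasDerivWithinAt θ (g (θ t)) (Icc 0 T) t)
    (hθ' : ∀ t ∈ Icc 0 T, HasDerivWithinAt θ' (g (θ' t)) (Icc 0 T) t)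
    (hθ0 : ‖θ 0‖ ≤ α) (hθ'0 : ‖θ' 0‖ ≤ α) (hRT : R⁻¹ ≤ bernoulliRecip μ β α T)
    {t : ℝ} (ht : t ∈ Icc 0 T) :
    ‖θ t - θ' t‖ ≤ (α * bernoulliRecip μ β α t)⁻¹ * ‖θ 0 - θ' 0‖ := by
  set w := bernoulliRecip μ β α
  have hanti := strictAnti_bernoulliRecip hμ hα hβ
  have hw : ∀ x ∈ Icc 0 T, R⁻¹ ≤ w x := fun x hx => hRT.trans (hanti.antitone hx.2)
  have hw0 : 0 < w t := (inv_pos.2 hR).trans_le (hw t ht)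
  have hderiv : ∀ x ∈ Icc 0 T, HasDerivWithinAt (fun x => ‖θ x - θ' x‖ ^ 2 * w x ^ 2)
      (2 * w x * (w x * ⟪θ x - θ' x, g (θ x) - g (θ' x)⟫
        - (μ * w x + β) * ‖θ x - θ' x‖ ^ 2)) (Icc 0 T) x := fun x hx =>
    ((hθ x hx).sub (hθ' x hx)).norm_sq_mul_bernoulliRecip_sq hμ.ne'
  have hmono : AntitoneOn (fun x => ‖θ x - θ' x‖ ^ 2 * w x ^ 2) (Icc 0 T) := by
    refine antitoneOn_of_hasDerivWithinAt_nonpos (convex_Icc 0 T)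
      (fun x hx => (hderiv x hx).continuousWithinAt)
      (fun x hx => (hderiv x (interior_subset hx)).mono interior_subset) fun x hx => ?_
    rw [interior_Icc] at hx
    have hRx : R⁻¹ < w x := hRT.trans_lt (hanti hx.2)
    have hwx : 0 < w x := (inv_pos.2 hR).trans hRx
    have hconf := fun {γ : ℝ → E} hγ hγ0 =>
      norm_mul_bernoulliRecip_le_one (θ := γ) hg hg0 hβ hR hμ hα hγ hγ0
        (Ioo_subset_Icc_self hx) hRx
    have := mul_inner_sub_map_sub_le hg hR hRx.le (hconf hθ hθ0) (hconf hθ' hθ'0)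
    nlinarith
  have hsq := hmono ⟨le_rfl, ht.1.trans ht.2⟩ ht ht.1
  simp only [w, bernoulliRecip_zero, ← mul_pow] at hsq
  have hle := (pow_le_pow_iff_left₀ (by positivity) (by positivity) two_ne_zero).1 hsq
  calc ‖θ t - θ' t‖ = ‖θ t - θ' t‖ * w t * (w t)⁻¹ := by field_simp
    _ ≤ ‖θ 0 - θ' 0‖ * α⁻¹ * (w t)⁻¹ := by gcongr
    _ = (α * w t)⁻¹ * ‖θ 0 - θ' 0‖ := by rw [mul_inv]; ring

end Trajectories

theorem stmt16_general {D : ℕ} (μ₁ β : ℝ) (hμ₁ : 0 < μ₁) (hβ : 0 < β)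
    (R : ℝ)
    (g : EuclideanSpace ℝ (Fin D) → EuclideanSpace ℝ (Fin D))
    (hg : ContDiff ℝ 1 g) (hg0 : g 0 = 0)
    (hJlip : ∀ x h : EuclideanSpace ℝ (Fin D), ‖x‖ ≤ R → ‖x + h‖ ≤ R →
      ‖fderiv ℝ g x - fderiv ℝ g (x + h)‖ ≤ β * ‖h‖)
    (hJ0 : ∀ h : EuclideanSpace ℝ (Fin D), (inner ℝ h (fderiv ℝ g 0 h) : ℝ) ≤ μ₁ * ‖h‖ ^ 2)
    (α r : ℝ) (hα : 0 < α) (hαr : α ≤ r) (hrR : r ≤ R)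
    (θ θhat : ℝ → EuclideanSpace ℝ (Fin D))
    (hθ : ∀ t ∈ Set.Icc (0 : ℝ)
        (((Real.log r - Real.log (1 + (β / μ₁) * r)) -
          (Real.log α - Real.log (1 + (β / μ₁) * α))) / μ₁),
      HasDerivWithinAt θ (g (θ t))
        (Set.Icc (0 : ℝ)
          (((Real.log r - Real.log (1 + (β / μ₁) * r)) -
            (Real.log α - Real.log (1 + (β / μ₁) * α))) / μ₁)) t)
    (hθhat : ∀ t ∈ Set.Icc (0 : ℝ)
        (((Real.log r - Real.log (1 + (β / μ₁) * r)) -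
          (Real.log α - Real.log (1 + (β / μ₁) * α))) / μ₁),
      HasDerivWithinAt θhat (g (θhat t))
        (Set.Icc (0 : ℝ)
          (((Real.log r - Real.log (1 + (β / μ₁) * r)) -
            (Real.log α - Real.log (1 + (β / μ₁) * α))) / μ₁)) t)
    (hθ0 : ‖θ 0‖ ≤ α) (hθhat0 : ‖θhat 0‖ ≤ α) :
    ∀ t ∈ Set.Icc (0 : ℝ)
        (((Real.log r - Real.log (1 + (β / μ₁) * r)) -
          (Real.log α - Real.log (1 + (β / μ₁) * α))) / μ₁),
      ‖θ t - θhat t‖ ≤ Real.exp (μ₁ * t + (β / μ₁) * r) * ‖θ 0 - θhat 0‖ := by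
  intro t ht
  have hr : 0 < r := hα.trans_le hαr
  have hwT := bernoulliRecip_log_div hμ₁ hβ.le hα hr
  have hwt : r⁻¹ ≤ bernoulliRecip μ₁ β α t :=
    hwT ▸ (strictAnti_bernoulliRecip hμ₁ hα hβ.le).antitone ht.2
  calc ‖θ t - θhat t‖ ≤ (α * bernoulliRecip μ₁ β α t)⁻¹ * ‖θ 0 - θhat 0‖ :=
        norm_sub_le_inv_mul_bernoulliRecip_mul
          (fun _ _ _ => inner_sub_map_sub_le (hg.differentiable one_ne_zero) hβ.le hJlip hJ0)
          hg0 hβ.le (hr.trans_le hrR) hμ₁ hα hθ hθhat hθ0 hθhat0 (hwT ▸ inv_anti₀ hr hrR) ht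
    _ ≤ Real.exp (μ₁ * t + (β / μ₁) * r) * ‖θ 0 - θhat 0‖ := by
        gcongr; exact inv_mul_bernoulliRecip_le_exp hμ₁ hβ.le hr hwt

/-- Trajectory coupling lemma: with `κ = β/μ₁`, `0 < R ≤ 1/κ`,
`F(x) = log x − log(1 + κx)`, `T_α(r) = (F(r) − F(α))/μ₁`, if `g` is `C¹`, `g(0) = 0`, the
Jacobian is `β`-Lipschitz on the ball of radius `R`, and `⟨h, J(0)h⟩ ≤ μ₁‖h‖²`, then any two
solutions `θ, θ̂` of `θ' = g(θ)` on `[0, T_α(r)]` starting within distance `α` of the origin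
satisfy `‖θ(t) − θ̂(t)‖ ≤ e^{μ₁ t + κ r} ‖θ(0) − θ̂(0)‖`. -/
theorem stmt16 {D : ℕ} (μ₁ β : ℝ) (hμ₁ : 0 < μ₁) (hβ : 0 < β)
    (R : ℝ) (hR0 : 0 < R) (hR : R ≤ 1 / (β / μ₁))
    (g : EuclideanSpace ℝ (Fin D) → EuclideanSpace ℝ (Fin D))
    (hg : ContDiff ℝ 1 g) (hg0 : g 0 = 0)
    (hJlip : ∀ x h : EuclideanSpace ℝ (Fin D), ‖x‖ ≤ R → ‖x + h‖ ≤ R →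
      ‖fderiv ℝ g x - fderiv ℝ g (x + h)‖ ≤ β * ‖h‖)
    (hJ0 : ∀ h : EuclideanSpace ℝ (Fin D), (inner ℝ h (fderiv ℝ g 0 h) : ℝ) ≤ μ₁ * ‖h‖ ^ 2)
    (α r : ℝ) (hα : 0 < α) (hαr : α ≤ r) (hrR : r ≤ R)
    (θ θhat : ℝ → EuclideanSpace ℝ (Fin D))
    (hθ : ∀ t ∈ Set.Icc (0 : ℝ)
        (((Real.log r - Real.log (1 + (β / μ₁) * r)) -
          (Real.log α - Real.log (1 + (β / μ₁) * α))) / μ₁),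
      HasDerivWithinAt θ (g (θ t))
        (Set.Icc (0 : ℝ)
          (((Real.log r - Real.log (1 + (β / μ₁) * r)) -
            (Real.log α - Real.log (1 + (β / μ₁) * α))) / μ₁)) t)
    (hθhat : ∀ t ∈ Set.Icc (0 : ℝ)
        (((Real.log r - Real.log (1 + (β / μ₁) * r)) -
          (Real.log α - Real.log (1 + (β / μ₁) * α))) / μ₁),
      HasDerivWithinAt θhat (g (θhat t))
        (Set.Icc (0 : ℝ)
          (((Real.log r - Real.log (1 + (β / μ₁) * r)) -
            (Real.log α - Real.log (1 + (β / μ₁) * α))) / μ₁)) t)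
    (hθ0 : ‖θ 0‖ ≤ α) (hθhat0 : ‖θhat 0‖ ≤ α) :
    ∀ t ∈ Set.Icc (0 : ℝ)
        (((Real.log r - Real.log (1 + (β / μ₁) * r)) -
          (Real.log α - Real.log (1 + (β / μ₁) * α))) / μ₁),
      ‖θ t - θhat t‖ ≤ Real.exp (μ₁ * t + (β / μ₁) * r) * ‖θ 0 - θhat 0‖ :=
  stmt16_general μ₁ β hμ₁ hβ R g hg hg0 hJlip hJ0 α r hα hαr hrR θ θhat hθ hθhat hθ0 hθhat0
end

section
/- Let A and B be real d×d positive semidefinite matrices and let P ≥ 1 be a real number. Then ‖A^P − B^P‖_F ≤ P·‖A − B‖_F·max{‖A‖₂^{P−1}, ‖B‖₂^{P−1}}, where X^P denotes the PSD matrix power. -/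
open Matrix

attribute [local instance] Matrix.frobeniusNormedAddCommGroup Matrix.frobeniusNormedSpace

/-- The PSD matrix power `A^s` for a real exponent `s ≥ 0` (spectral/functional calculus);
junk (`0`) on non-Hermitian matrices. -/
noncomputable def psdPow {d : ℕ} (A : Matrix (Fin d) (Fin d) ℝ) (s : ℝ) :
    Matrix (Fin d) (Fin d) ℝ :=
  if hA : A.IsHermitian then
    (hA.eigenvectorUnitary : Matrix (Fin d) (Fin d) ℝ) *
      Matrix.diagonal (fun i => hA.eigenvalues i ^ s) *
      (star (hA.eigenvectorUnitary : Matrix (Fin d) (Fin d) ℝ))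
  else 0

/-- The spectral norm (largest singular value) of a real matrix, i.e. the operator norm of the
induced map between Euclidean spaces. -/
noncomputable def specNorm {d : ℕ} (A : Matrix (Fin d) (Fin d) ℝ) : ℝ :=
  ‖LinearMap.toContinuousLinearMap (Matrix.toEuclideanLin A)‖

/-- Scalar mean-value inequality for `rpow`. -/
private lemma scalar_rpow_lipschitz {x y m P : ℝ} (hx : 0 ≤ x) (hy : 0 ≤ y) (hxm : x ≤ m)
    (hym : y ≤ m) (hP : 1 ≤ P) :
    |x ^ P - y ^ P| ≤ P * m ^ (P - 1) * |x - y| := by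
  have hP0 : (0:ℝ) ≤ P := by linarith
  have h := Convex.norm_image_sub_le_of_norm_hasDerivWithin_le
    (f := fun u : ℝ => u ^ P) (f' := fun t : ℝ => P * t ^ (P - 1)) (s := Set.Icc (0:ℝ) m)
    (fun t _ => (Real.hasDerivAt_rpow_const (Or.inr hP)).hasDerivWithinAt)
    (fun t ht => by
      rw [Real.norm_eq_abs, abs_mul, abs_of_nonneg hP0,
        abs_of_nonneg (Real.rpow_nonneg ht.1 _)]
      exact mul_le_mul_of_nonneg_left (Real.rpow_le_rpow ht.1 ht.2 (by linarith)) hP0)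
    (convex_Icc _ _) ⟨hy, hym⟩ ⟨hx, hxm⟩
  simpa [Real.norm_eq_abs] using h

private lemma frob_eq_sqrt {d : ℕ} (M : Matrix (Fin d) (Fin d) ℝ) :
    ‖M‖ = Real.sqrt (∑ i, ∑ j, (M i j) ^ 2) := by
  rw [Matrix.frobenius_norm_def, Real.sqrt_eq_rpow]
  congr 1
  refine Finset.sum_congr rfl fun i _ => Finset.sum_congr rfl fun j _ => ?_
  rw [Real.norm_eq_abs, show (2:ℝ) = ((2:ℕ):ℝ) by norm_num, Real.rpow_natCast, sq_abs]

private lemma frob_eq_trace {d : ℕ} (M : Matrix (Fin d) (Fin d) ℝ) :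
    ‖M‖ = Real.sqrt ((Mᵀ * M).trace) := by
  rw [frob_eq_sqrt]
  congr 1
  rw [Matrix.trace]
  simp only [Matrix.diag, Matrix.mul_apply, Matrix.transpose_apply, sq]
  rw [Finset.sum_comm]

private lemma frob_unitary {d : ℕ} (U V : Matrix.unitaryGroup (Fin d) ℝ)
    (M : Matrix (Fin d) (Fin d) ℝ) :
    ‖(U : Matrix (Fin d) (Fin d) ℝ) * M * star (V : Matrix (Fin d) (Fin d) ℝ)‖ = ‖M‖ := by
  have hU : (U : Matrix (Fin d) (Fin d) ℝ)ᵀ * U = 1 := by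
    simpa [Matrix.star_eq_conjTranspose, Matrix.conjTranspose_eq_transpose_of_trivial] using
      Matrix.mem_unitaryGroup_iff'.mp U.2
  have hV : (V : Matrix (Fin d) (Fin d) ℝ)ᵀ * V = 1 := by
    simpa [Matrix.star_eq_conjTranspose, Matrix.conjTranspose_eq_transpose_of_trivial] using
      Matrix.mem_unitaryGroup_iff'.mp V.2
  have hstarV : star (V : Matrix (Fin d) (Fin d) ℝ) = (V : Matrix (Fin d) (Fin d) ℝ)ᵀ := by
    simp [Matrix.star_eq_conjTranspose, Matrix.conjTranspose_eq_transpose_of_trivial]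
  rw [frob_eq_trace, frob_eq_trace]
  congr 1
  rw [hstarV]
  have : ((U : Matrix (Fin d) (Fin d) ℝ) * M * (V : Matrix (Fin d) (Fin d) ℝ)ᵀ)ᵀ *
      ((U : Matrix (Fin d) (Fin d) ℝ) * M * (V : Matrix (Fin d) (Fin d) ℝ)ᵀ) =
      (V : Matrix (Fin d) (Fin d) ℝ) * (Mᵀ * M) * (V : Matrix (Fin d) (Fin d) ℝ)ᵀ := by
    simp only [Matrix.transpose_mul, Matrix.transpose_transpose]
    calc (V : Matrix (Fin d) (Fin d) ℝ) * (Mᵀ * (U : Matrix (Fin d) (Fin d) ℝ)ᵀ) *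
          ((U : Matrix (Fin d) (Fin d) ℝ) * M * (V : Matrix (Fin d) (Fin d) ℝ)ᵀ)
        = (V : Matrix (Fin d) (Fin d) ℝ) * Mᵀ *
            ((U : Matrix (Fin d) (Fin d) ℝ)ᵀ * (U : Matrix (Fin d) (Fin d) ℝ)) *
            (M * (V : Matrix (Fin d) (Fin d) ℝ)ᵀ) := by
          simp only [Matrix.mul_assoc]
      _ = (V : Matrix (Fin d) (Fin d) ℝ) * (Mᵀ * M) * (V : Matrix (Fin d) (Fin d) ℝ)ᵀ := by
          rw [hU, Matrix.mul_one]; simp only [Matrix.mul_assoc]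
  rw [this, Matrix.trace_mul_cycle, ← Matrix.mul_assoc, hV, Matrix.one_mul]

private lemma frob_le_of_entry {d : ℕ} {c : ℝ} (hc : 0 ≤ c)
    (M N : Matrix (Fin d) (Fin d) ℝ) (h : ∀ i j, |N i j| ≤ c * |M i j|) :
    ‖N‖ ≤ c * ‖M‖ := by
  rw [frob_eq_sqrt, frob_eq_sqrt, ← Real.sqrt_sq hc, ← Real.sqrt_mul (sq_nonneg c)]
  apply Real.sqrt_le_sqrt
  rw [Finset.mul_sum]
  refine Finset.sum_le_sum fun i _ => ?_
  rw [Finset.mul_sum]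
  refine Finset.sum_le_sum fun j _ => ?_
  calc N i j ^ 2 = |N i j| ^ 2 := (sq_abs _).symm
    _ ≤ (c * |M i j|) ^ 2 := by
        apply pow_le_pow_left₀ (abs_nonneg _) (h i j)
    _ = c ^ 2 * M i j ^ 2 := by rw [mul_pow, sq_abs]

private lemma eig_le_specNorm {d : ℕ} {A : Matrix (Fin d) (Fin d) ℝ} (hA : A.IsHermitian)
    (i : Fin d) : |hA.eigenvalues i| ≤ specNorm A := by
  set v : EuclideanSpace ℝ (Fin d) := hA.eigenvectorBasis i with hv
  have hv1 : ‖v‖ = 1 := hA.eigenvectorBasis.orthonormal.1 i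
  have happ : Matrix.toEuclideanLin A v = hA.eigenvalues i • v := by
    rw [Matrix.toEuclideanLin_apply]
    ext j
    have := congrFun (hA.mulVec_eigenvectorBasis i) j
    simpa using this
  calc |hA.eigenvalues i| = ‖hA.eigenvalues i • v‖ := by
        rw [norm_smul, hv1, mul_one, Real.norm_eq_abs]
    _ = ‖(LinearMap.toContinuousLinearMap (Matrix.toEuclideanLin A)) v‖ := by
        rw [LinearMap.coe_toContinuousLinearMap', happ]
    _ ≤ specNorm A * ‖v‖ := ContinuousLinearMap.le_opNorm _ _
    _ = specNorm A := by rw [hv1, mul_one]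

/-- For real `d×d` PSD matrices `A, B` and a real `P ≥ 1`,
`‖A^P − B^P‖_F ≤ P ‖A − B‖_F max (‖A‖₂^{P−1}, ‖B‖₂^{P−1})`, where `X^P` is the PSD matrix
power, `‖·‖_F` the Frobenius norm and `‖·‖₂` the spectral norm. -/
theorem stmt17 {d : ℕ} (A B : Matrix (Fin d) (Fin d) ℝ)
    (hA : A.PosSemidef) (hB : B.PosSemidef) (P : ℝ) (hP : 1 ≤ P) :
    ‖psdPow A P - psdPow B P‖ ≤
      P * ‖A - B‖ * max (specNorm A ^ (P - 1)) (specNorm B ^ (P - 1)) := by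
  have hA' : A.IsHermitian := hA.1
  have hB' : B.IsHermitian := hB.1
  set X : Matrix (Fin d) (Fin d) ℝ := (hA'.eigenvectorUnitary : Matrix (Fin d) (Fin d) ℝ)
  set Y : Matrix (Fin d) (Fin d) ℝ := (hB'.eigenvectorUnitary : Matrix (Fin d) (Fin d) ℝ)
  have hXX : X * star X = 1 := Matrix.mem_unitaryGroup_iff.mp hA'.eigenvectorUnitary.2
  have hYY : Y * star Y = 1 := Matrix.mem_unitaryGroup_iff.mp hB'.eigenvectorUnitary.2
  set lam := hA'.eigenvalues
  set mu := hB'.eigenvalues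
  set W : Matrix (Fin d) (Fin d) ℝ := star X * Y with hW
  set sA := specNorm A
  set sB := specNorm B
  have hsA : 0 ≤ sA := norm_nonneg _
  have hsB : 0 ≤ sB := norm_nonneg _
  set m := max sA sB with hm
  set c := P * m ^ (P - 1) with hc
  have hc0 : 0 ≤ c := mul_nonneg (by linarith) (Real.rpow_nonneg (le_max_of_le_left hsA) _)
  -- identity for powers
  set N : Matrix (Fin d) (Fin d) ℝ :=
    Matrix.diagonal (fun i => lam i ^ P) * W - W * Matrix.diagonal (fun j => mu j ^ P) with hN
  set M : Matrix (Fin d) (Fin d) ℝ :=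
    Matrix.diagonal (fun i => lam i) * W - W * Matrix.diagonal (fun j => mu j) with hM
  have idN : psdPow A P - psdPow B P = X * N * star Y := by
    rw [psdPow, psdPow, dif_pos hA', dif_pos hB', hN, hW]
    have e1 : X * (Matrix.diagonal (fun i => lam i ^ P) * (star X * Y)) * star Y
          = X * Matrix.diagonal (fun i => lam i ^ P) * star X := by
      calc X * (Matrix.diagonal (fun i => lam i ^ P) * (star X * Y)) * star Y
          = (X * Matrix.diagonal (fun i => lam i ^ P) * star X) * (Y * star Y) := by
            simp only [Matrix.mul_assoc]
        _ = X * Matrix.diagonal (fun i => lam i ^ P) * star X := by rw [hYY, Matrix.mul_one]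
    have e2 : X * (star X * Y * Matrix.diagonal (fun j => mu j ^ P)) * star Y
          = Y * Matrix.diagonal (fun j => mu j ^ P) * star Y := by
      calc X * (star X * Y * Matrix.diagonal (fun j => mu j ^ P)) * star Y
          = (X * star X) * (Y * Matrix.diagonal (fun j => mu j ^ P) * star Y) := by
            simp only [Matrix.mul_assoc]
        _ = Y * Matrix.diagonal (fun j => mu j ^ P) * star Y := by rw [hXX, Matrix.one_mul]
    rw [Matrix.mul_sub, Matrix.sub_mul, e1, e2]
  have idM : A - B = X * M * star Y := by
    rw [hM, hW]
    have e1 : X * (Matrix.diagonal (fun i => lam i) * (star X * Y)) * star Y = A := by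
      calc X * (Matrix.diagonal (fun i => lam i) * (star X * Y)) * star Y
          = (X * Matrix.diagonal (fun i => lam i) * star X) * (Y * star Y) := by
            simp only [Matrix.mul_assoc]
        _ = X * Matrix.diagonal (fun i => lam i) * star X := by rw [hYY, Matrix.mul_one]
        _ = A := by
            conv_rhs => rw [hA'.spectral_theorem]
            congr 2
    have e2 : X * (star X * Y * Matrix.diagonal (fun j => mu j)) * star Y = B := by
      calc X * (star X * Y * Matrix.diagonal (fun j => mu j)) * star Y
          = (X * star X) * (Y * Matrix.diagonal (fun j => mu j) * star Y) := by
            simp only [Matrix.mul_assoc]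
        _ = Y * Matrix.diagonal (fun j => mu j) * star Y := by rw [hXX, Matrix.one_mul]
        _ = B := by
            conv_rhs => rw [hB'.spectral_theorem]
            congr 2
    rw [Matrix.mul_sub, Matrix.sub_mul, e1, e2]
  -- entrywise bound
  have hentry : ∀ i j, |N i j| ≤ c * |M i j| := by
    intro i j
    have hNij : N i j = (lam i ^ P - mu j ^ P) * W i j := by
      simp [hN, Matrix.sub_apply, Matrix.diagonal_mul, Matrix.mul_diagonal, sub_mul, mul_comm]
    have hMij : M i j = (lam i - mu j) * W i j := by
      simp [hM, Matrix.sub_apply, Matrix.diagonal_mul, Matrix.mul_diagonal, sub_mul, mul_comm]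
    rw [hNij, hMij, abs_mul, abs_mul, ← mul_assoc]
    apply mul_le_mul_of_nonneg_right _ (abs_nonneg _)
    have hlam0 : 0 ≤ lam i := hA.eigenvalues_nonneg i
    have hmu0 : 0 ≤ mu j := hB.eigenvalues_nonneg j
    have hlamm : lam i ≤ m := le_trans (le_trans (le_abs_self _) (eig_le_specNorm hA' i))
      (le_max_left _ _)
    have hmum : mu j ≤ m := le_trans (le_trans (le_abs_self _) (eig_le_specNorm hB' j))
      (le_max_right _ _)
    exact scalar_rpow_lipschitz hlam0 hmu0 hlamm hmum hP
  have hmax : m ^ (P - 1) = max (sA ^ (P - 1)) (sB ^ (P - 1)) := by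
    rcases le_total sA sB with h | h
    · rw [hm, max_eq_right h, max_eq_right (Real.rpow_le_rpow hsA h (by linarith))]
    · rw [hm, max_eq_left h, max_eq_left (Real.rpow_le_rpow hsB h (by linarith))]
  calc ‖psdPow A P - psdPow B P‖ = ‖X * N * star Y‖ := by rw [idN]
    _ = ‖N‖ := frob_unitary _ _ _
    _ ≤ c * ‖M‖ := frob_le_of_entry hc0 M N hentry
    _ = c * ‖X * M * star Y‖ := by rw [frob_unitary]
    _ = c * ‖A - B‖ := by rw [← idM]
    _ = P * ‖A - B‖ * max (sA ^ (P - 1)) (sB ^ (P - 1)) := by rw [hc, hmax]; ring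
end

section
/- Let A be a real D×D matrix and let 0 ≤ K ≤ D. Suppose û₁, …, û_K ∈ ℝ^D are linearly independent left eigenvectors of A, i.e. ûᵢᵀA = λ̂ᵢ·ûᵢᵀ for reals λ̂₁, …, λ̂_K, and ṽ₁, …, ṽ_{D−K} ∈ ℝ^D are linearly independent right eigenvectors of A, i.e. A·ṽⱼ = λ̃ⱼ·ṽⱼ for reals λ̃₁, …, λ̃_{D−K}, and suppose ⟨ûᵢ, ṽⱼ⟩ = 0 for all 1 ≤ i ≤ K and 1 ≤ j ≤ D−K. Then the characteristic polynomial of A equals ∏_{i=1}^{K}(X − λ̂ᵢ) · ∏_{j=1}^{D−K}(X − λ̃ⱼ); in particular, λ̂₁, …, λ̂_K, λ̃₁, …, λ̃_{D−K} are all the eigenvalues of A counted with multiplicity. -/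
open Matrix Polynomial

/-!
Put the left eigenvectors into the rows of `U` and the right eigenvectors into the columns of
`V`, so that `U * A = B * U`, `A * V = V * C` and `U * V = 0` with `B`, `C` diagonal. The Gram
matrices `U * Uᵀ` and `Vᵀ * V` are invertible, so `P = [(U Uᵀ)⁻¹ U; (Vᵀ V)⁻¹ Vᵀ]` is a left
inverse of `Q = [Uᵀ | V]`, hence (by counting dimensions) a two-sided inverse. Conjugating `A`
by it gives a block lower triangular matrix whose diagonal blocks are `C` and a conjugate of `B`.
-/

namespace Matrix

variable {R : Type*} {m n ι κ : Type*} [Fintype m] [Fintype n] [Fintype ι] [Fintype κ]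

theorem charpoly_mul_mul_of_mul_eq_one [CommRing R] [DecidableEq m] [DecidableEq n]
    {P : Matrix m n R} {Q : Matrix n m R}
    (hcard : Fintype.card m = Fintype.card n) (hPQ : P * Q = 1) (A : Matrix n n R) :
    (P * A * Q).charpoly = A.charpoly := by
  have hQP : Q * P = 1 := (mul_eq_one_comm_of_equiv (Fintype.equivOfCardEq hcard)).mp hPQ
  have h := charpoly_mul_comm' (P * A) Q
  rw [← Matrix.mul_assoc, hQP, Matrix.one_mul, hcard] at h
  exact (isRegular_X_pow _).left.eq_iff.mp h

theorem charpoly_eq_mul_of_orthogonal_semiconj [CommRing R] [DecidableEq n] [DecidableEq ι]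
    [DecidableEq κ] {A : Matrix n n R} {U : Matrix ι n R} {V : Matrix n κ R}
    {B : Matrix ι ι R} {C : Matrix κ κ R}
    (hcard : Fintype.card ι + Fintype.card κ = Fintype.card n)
    (hU : IsUnit (U * Uᵀ).det) (hV : IsUnit (Vᵀ * V).det)
    (hUA : U * A = B * U) (hAV : A * V = V * C) (hUV : U * V = 0) :
    A.charpoly = B.charpoly * C.charpoly := by
  have hVU : Vᵀ * Uᵀ = 0 := by rw [← transpose_mul, hUV, transpose_zero]
  let P := fromRows ((U * Uᵀ)⁻¹ * U) ((Vᵀ * V)⁻¹ * Vᵀ)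
  let Q := fromCols Uᵀ V
  have hPQ : P * Q = 1 := by
    simp only [P, Q, fromRows_mul_fromCols, ← fromBlocks_one, Matrix.mul_assoc, hUV, hVU,
      Matrix.mul_zero, nonsing_inv_mul _ hU, nonsing_inv_mul _ hV]
  have hPAQ : P * A * Q =
      fromBlocks ((U * Uᵀ)⁻¹ * B * (U * Uᵀ)) 0 ((Vᵀ * V)⁻¹ * Vᵀ * A * Uᵀ) C := by
    rw [fromRows_mul, fromRows_mul_fromCols]
    congr 1
    · rw [Matrix.mul_assoc _ U, hUA, Matrix.mul_assoc, Matrix.mul_assoc, Matrix.mul_assoc]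
    · rw [Matrix.mul_assoc _ U, hUA, Matrix.mul_assoc, Matrix.mul_assoc, hUV, Matrix.mul_zero,
        Matrix.mul_zero]
    · rw [Matrix.mul_assoc, Matrix.mul_assoc, hAV, ← Matrix.mul_assoc Vᵀ,
        nonsing_inv_mul_cancel_left _ _ hV]
  rw [← charpoly_mul_mul_of_mul_eq_one (by simpa using hcard) hPQ A, hPAQ,
    charpoly_fromBlocks_zero₁₂, charpoly_mul_comm, ← Matrix.mul_assoc,
    mul_nonsing_inv _ hU, Matrix.one_mul]

theorem isUnit_det_mul_transpose [Field R] [LinearOrder R] [IsStrictOrderedRing R]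
    [DecidableEq m] {U : Matrix m n R} (h : LinearIndependent R U.row) : IsUnit (U * Uᵀ).det := by
  rw [← isUnit_iff_isUnit_det, ← linearIndependent_rows_iff_isUnit,
    linearIndependent_iff_card_eq_finrank_span, Set.finrank, ← rank_eq_finrank_span_row,
    rank_self_mul_transpose, h.rank_matrix]

end Matrix

/-- If a real `D×D` matrix `A` has `K` linearly independent left eigenvectors
`ûᵢ` (eigenvalues `λ̂ᵢ`) and `D−K` linearly independent right eigenvectors `ṽⱼ` (eigenvalues
`λ̃ⱼ`) with `⟨ûᵢ, ṽⱼ⟩ = 0` for all `i, j`, then the characteristic polynomial of `A` equals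
`∏ᵢ (X − λ̂ᵢ) · ∏ⱼ (X − λ̃ⱼ)`; in particular these are all the eigenvalues of `A` with
multiplicity. -/
theorem stmt18 {D : ℕ} (A : Matrix (Fin D) (Fin D) ℝ) (K : ℕ) (hK : K ≤ D)
    (uhat : Fin K → (Fin D → ℝ)) (lamhat : Fin K → ℝ)
    (vtil : Fin (D - K) → (Fin D → ℝ)) (lamtil : Fin (D - K) → ℝ)
    (huind : LinearIndependent ℝ uhat)
    (hvind : LinearIndependent ℝ vtil)
    (hleft : ∀ i : Fin K, Matrix.vecMul (uhat i) A = lamhat i • uhat i)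
    (hright : ∀ j : Fin (D - K), A *ᵥ vtil j = lamtil j • vtil j)
    (horth : ∀ (i : Fin K) (j : Fin (D - K)), uhat i ⬝ᵥ vtil j = 0) :
    A.charpoly =
      (∏ i : Fin K, (Polynomial.X - Polynomial.C (lamhat i))) *
        ∏ j : Fin (D - K), (Polynomial.X - Polynomial.C (lamtil j)) := by
  have hcard : Fintype.card (Fin K) + Fintype.card (Fin (D - K)) = Fintype.card (Fin D) := by
    simp only [Fintype.card_fin]; omega
  rw [← charpoly_diagonal, ← charpoly_diagonal]
  refine charpoly_eq_mul_of_orthogonal_semiconj (U := of uhat) (V := (of vtil)ᵀ) hcard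
    (isUnit_det_mul_transpose huind)
    (by simpa only [transpose_transpose] using isUnit_det_mul_transpose (U := of vtil) hvind)
    ?_ ?_ ?_
  · ext i x
    rw [diagonal_mul]
    simpa [mul_apply, vecMul, dotProduct] using congrFun (hleft i) x
  · ext x j
    rw [mul_diagonal]
    simpa [mul_apply, mulVec, dotProduct, mul_comm] using congrFun (hright j) x
  · ext i j
    simpa [mul_apply, dotProduct] using horth i j
end

section
/- Let L : ℝ^D → ℝ be C¹-smooth, let θ̄ ∈ ℝ^D, and let c > 0, r > 0, β > 0, and μ ∈ [1/2, 1). Suppose that on the closed ball {θ : ‖θ − θ̄‖ ≤ r}: (a) L(θ) ≥ L(θ̄); (b) ∇L is β-Lipschitz (so that L(θ) − L(θ̄) ≤ (β/2)‖θ − θ̄‖² there); and (c) the Łojasiewicz inequality ‖∇L(θ)‖ ≥ c·(L(θ) − L(θ̄))^μ holds. Then there exist δ > 0 and C > 0 such that for every solution θ : [0, ∞) → ℝ^D of the gradient flow θ'(t) = −∇L(θ(t)) with ‖θ(0) − θ̄‖ ≤ δ, the limit θ_∞ := lim_{t→∞} θ(t) exists and satisfies ‖θ_∞ − θ̄‖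 ≤ C·‖θ(0) − θ̄‖^{2(1−μ)}. -/
/-!
Along a gradient flow the energy `g = L ∘ θ - L θbar` decreases with `g' = -‖∇L‖²`, and the
Łojasiewicz inequality turns this into `(g ^ (1 - μ))' ≤ -(1 - μ) c ‖θ'‖`. Hence the length of
the trajectory is bounded by `g(0) ^ (1 - μ) / ((1 - μ) c)`, which by the quadratic growth
bound `g(0) ≤ β ‖θ 0 - θbar‖²` is `O(‖θ 0 - θbar‖ ^ (2 (1 - μ)))`. For a small start this keeps
the trajectory inside the ball where the hypotheses hold (a continuity argument), and the
finite length makes `θ` Cauchy at infinity.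
-/

open Filter Topology Set Metric

theorem ContinuousOn.le_of_bootstrap {f : ℝ → ℝ} {ρ R : ℝ} (hf : ContinuousOn f (Ici 0))
    (hρR : ρ < R) (h0 : f 0 < R)
    (hboot : ∀ t, 0 ≤ t → (∀ u ∈ Icc 0 t, f u ≤ R) → f t ≤ ρ) {t : ℝ} (ht : 0 ≤ t) :
    f t ≤ ρ := by
  suffices hlt : ∀ t, 0 ≤ t → f t < R from hboot t ht fun u hu => (hlt u hu.1).le
  intro t₁ ht₁
  by_contra! hR
  set Z := Icc 0 t₁ ∩ f ⁻¹' Ici R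
  have hZbdd : BddBelow Z := ⟨0, fun u hu => hu.1.1⟩
  have hZ : IsClosed Z :=
    (hf.mono Icc_subset_Ici_self).preimage_isClosed_of_isClosed isClosed_Icc isClosed_Ici
  obtain ⟨⟨hT0, hTt₁⟩, hRT⟩ : sInf Z ∈ Z := hZ.csInf_mem ⟨t₁, ⟨ht₁, le_rfl⟩, hR⟩ hZbdd
  set T := sInf Z
  have hbelow : ∀ u ∈ Ico 0 T, f u ≤ R := fun u hu => le_of_lt <| not_le.1 fun h =>
    hu.2.not_ge (csInf_le hZbdd ⟨⟨hu.1, hu.2.le.trans hTt₁⟩, h⟩)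
  have hTpos : 0 < T := hT0.lt_of_ne fun h => (h ▸ h0).not_ge hRT
  have hfT : f T ≤ R :=
    ContinuousWithinAt.closure_le (by rw [closure_Ico hTpos.ne]; exact right_mem_Icc.2 hT0)
      ((hf T hT0).mono Ico_subset_Ici_self) continuousWithinAt_const hbelow
  have := hboot T hT0 fun u hu =>
    hu.2.lt_or_eq.elim (fun h => hbelow u ⟨hu.1, h⟩) fun h => h ▸ hfT
  linarith [show R ≤ f T from hRT]

theorem cauchySeq_of_dist_le_sub {ι α : Type*} [SemilatticeSup ι] [Nonempty ι]
    [PseudoMetricSpace α] {θ : ι → α} {φ : ι → ℝ} {s₀ : ι} (hφ : BddBelow (φ '' Ici s₀))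
    (h : ∀ s t, s₀ ≤ s → s ≤ t → dist (θ s) (θ t) ≤ φ s - φ t) : CauchySeq θ := by
  refine Metric.cauchySeq_iff'.2 fun ε hε => ?_
  obtain ⟨_, ⟨N, hN, rfl⟩, hNε⟩ :=
    exists_lt_of_csInf_lt (nonempty_Ici.image φ) (lt_add_of_pos_right (sInf (φ '' Ici s₀)) hε)
  refine ⟨N, fun n hn => ?_⟩
  have hinf : sInf (φ '' Ici s₀) ≤ φ n := csInf_le hφ ⟨n, le_trans hN hn, rfl⟩
  rw [dist_comm]
  linarith [h N n hN hn]

section GradientFlow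

variable {E : Type*} [NormedAddCommGroup E] [InnerProductSpace ℝ E] [CompleteSpace E]

theorem sub_le_mul_norm_sq_of_norm_gradient_le {L : E → ℝ} {x₀ x : E} {β : ℝ} (hβ : 0 ≤ β)
    (hL : ∀ z ∈ closedBall x₀ ‖x - x₀‖, DifferentiableAt ℝ L z)
    (hgrad : ∀ z ∈ closedBall x₀ ‖x - x₀‖, ‖gradient L z‖ ≤ β * ‖z - x₀‖) :
    L x - L x₀ ≤ β * ‖x - x₀‖ ^ 2 := by
  have hfderiv : ∀ z ∈ closedBall x₀ ‖x - x₀‖, ‖fderiv ℝ L z‖ ≤ β * ‖x - x₀‖ := fun z hz => by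
    rw [← toDual_gradient, LinearIsometryEquiv.norm_map]
    exact (hgrad z hz).trans (mul_le_mul_of_nonneg_left (mem_closedBall_iff_norm.1 hz) hβ)
  calc L x - L x₀ ≤ ‖L x - L x₀‖ := le_abs_self _
    _ ≤ β * ‖x - x₀‖ * ‖x - x₀‖ :=
      (convex_closedBall x₀ _).norm_image_sub_le_of_norm_fderiv_le hL hfderiv
        (mem_closedBall_self (norm_nonneg _)) (mem_closedBall_iff_norm.2 le_rfl)
    _ = β * ‖x - x₀‖ ^ 2 := by ring

theorem IsLocalMin.gradient_eq_zero {L : E → ℝ} {x₀ : E} (h : IsLocalMin L x₀) :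
    gradient L x₀ = 0 := by
  simp [gradient, h.fderiv_eq_zero]

theorem rpow_sub_le_of_isMinOn_of_lipschitz_gradient {L : E → ℝ} {x₀ x : E} {r β p : ℝ}
    (hL : Differentiable ℝ L) (hr : 0 < r) (hβ : 0 ≤ β) (hp : 0 ≤ p)
    (hmin : IsMinOn L (closedBall x₀ r) x₀)
    (hlip : ∀ y ∈ closedBall x₀ r, ‖gradient L y - gradient L x₀‖ ≤ β * ‖y - x₀‖)
    (hx : x ∈ closedBall x₀ r) :
    (L x - L x₀) ^ p ≤ β ^ p * ‖x - x₀‖ ^ (2 * p) := by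
  have h0 : gradient L x₀ = 0 := (hmin.isLocalMin (closedBall_mem_nhds x₀ hr)).gradient_eq_zero
  have hquad := sub_le_mul_norm_sq_of_norm_gradient_le hβ (fun z _ => hL z) fun z hz => by
    simpa [h0] using hlip z (closedBall_subset_closedBall (mem_closedBall_iff_norm.1 hx) hz)
  calc (L x - L x₀) ^ p ≤ (β * ‖x - x₀‖ ^ 2) ^ p :=
        Real.rpow_le_rpow (sub_nonneg.2 (hmin hx)) hquad hp
    _ = β ^ p * ‖x - x₀‖ ^ (2 * p) := by
        rw [Real.mul_rpow hβ (sq_nonneg _), ← Real.rpow_natCast_mul (norm_nonneg _),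
          Nat.cast_ofNat]

def IsGradientFlow (L : E → ℝ) (θ : ℝ → E) : Prop :=
  ∀ t ∈ Ici (0 : ℝ), HasDerivWithinAt θ (-(gradient L (θ t))) (Ici 0) t

namespace IsGradientFlow

variable {L : E → ℝ} {θ : ℝ → E}

theorem continuousOn (hθ : IsGradientFlow L θ) : ContinuousOn θ (Ici 0) :=
  fun t ht => (hθ t ht).continuousWithinAt

theorem hasDerivWithinAt_energy (hθ : IsGradientFlow L θ) {t : ℝ}
    (hL : DifferentiableAt ℝ L (θ t)) (ht : 0 ≤ t) :
    HasDerivWithinAt (fun u => L (θ u)) (-‖gradient L (θ t)‖ ^ 2) (Ici 0) t := by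
  have := hL.hasFDerivAt.comp_hasDerivWithinAt t (hθ t ht)
  rwa [← inner_gradient_left, inner_neg_right, real_inner_self_eq_norm_sq] at this

theorem antitoneOn_energy (hθ : IsGradientFlow L θ) (hL : Differentiable ℝ L) :
    AntitoneOn (fun u => L (θ u)) (Ici 0) :=
  antitoneOn_of_hasDerivWithinAt_nonpos (convex_Ici 0)
    (hL.continuous.comp_continuousOn hθ.continuousOn)
    (fun _ ht => (hθ.hasDerivWithinAt_energy (hL _) (interior_subset ht)).mono interior_subset)
    fun _ _ => neg_nonpos.2 (sq_nonneg _)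

theorem gradient_eq_zero_of_energy_eventuallyEq (hθ : IsGradientFlow L θ) {t : ℝ}
    (hL : DifferentiableAt ℝ L (θ t)) (ht : 0 ≤ t)
    (hconst : (fun u => L (θ u)) =ᶠ[𝓝[≥] t] fun _ => L (θ t)) :
    gradient L (θ t) = 0 := by
  have h := (uniqueDiffWithinAt_Ici t).eq_deriv _
    ((hθ.hasDerivWithinAt_energy hL ht).mono (Ici_subset_Ici.2 ht))
    ((hasDerivWithinAt_const t _ _).congr_of_eventuallyEq hconst rfl)
  simpa using h

theorem energy_eq_of_eq_min (hθ : IsGradientFlow L θ) (hL : Differentiable ℝ L) {m u t : ℝ}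
    (hu : 0 ≤ u) (hmin : ∀ v ∈ Icc u t, m ≤ L (θ v)) (hm : L (θ u) = m) :
    ∀ v ∈ Icc u t, L (θ v) = m := fun v hv =>
  le_antisymm (hm ▸ hθ.antitoneOn_energy hL hu (hu.trans hv.1) hv.1) (hmin v hv)

theorem gradient_eq_zero_of_energy_eq_min (hθ : IsGradientFlow L θ) (hL : Differentiable ℝ L)
    {m u t : ℝ} (hu : 0 ≤ u) (hut : u < t) (hmin : ∀ v ∈ Icc u t, m ≤ L (θ v))
    (hm : L (θ u) = m) : gradient L (θ u) = 0 := by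
  refine hθ.gradient_eq_zero_of_energy_eventuallyEq (hL _) hu ?_
  filter_upwards [Icc_mem_nhdsGE hut] with v hv
  rw [hθ.energy_eq_of_eq_min hL hu hmin hm v hv, hm]

-- Where the energy vanishes `x ↦ x ^ (1 - μ)` is not differentiable, but there the flow is at rest.
theorem hasDerivWithinAt_rpow_energy (hθ : IsGradientFlow L θ) (hL : Differentiable ℝ L)
    {m μ u t : ℝ} (hu : 0 ≤ u) (hut : u < t) (hmin : ∀ v ∈ Icc u t, m ≤ L (θ v)) :
    HasDerivWithinAt (fun v => (L (θ v) - m) ^ (1 - μ))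
      (-((1 - μ) * ‖gradient L (θ u)‖ ^ 2 / (L (θ u) - m) ^ μ)) (Ici u) u := by
  rcases (sub_nonneg.2 (hmin u (left_mem_Icc.2 hut.le))).lt_or_eq with hpos | hzero
  · refine ((((hθ.hasDerivWithinAt_energy (hL _) hu).mono (Ici_subset_Ici.2 hu)).sub_const
      m).rpow_const (Or.inl hpos.ne')).congr_deriv ?_
    rw [show 1 - μ - 1 = -μ by ring, Real.rpow_neg hpos.le]
    ring
  · have hm : L (θ u) = m := sub_eq_zero.1 hzero.symm
    rw [hθ.gradient_eq_zero_of_energy_eq_min hL hu hut hmin hm, norm_zero, zero_pow two_ne_zero,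
      mul_zero, zero_div, neg_zero]
    refine (hasDerivWithinAt_const u _ _).congr_of_eventuallyEq ?_ rfl
    filter_upwards [Icc_mem_nhdsGE hut] with v hv
    rw [hθ.energy_eq_of_eq_min hL hu hmin hm v hv, hm]

theorem norm_sub_le_of_lojasiewicz (hθ : IsGradientFlow L θ) (hL : Differentiable ℝ L)
    {m c μ s t : ℝ} (hc : 0 < c) (hμ : μ < 1) (hs : 0 ≤ s) (hst : s ≤ t)
    (hmin : ∀ u ∈ Icc s t, m ≤ L (θ u))
    (hloj : ∀ u ∈ Icc s t, c * (L (θ u) - m) ^ μ ≤ ‖gradient L (θ u)‖) :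
    ‖θ t - θ s‖ ≤ ((L (θ s) - m) ^ (1 - μ) - (L (θ t) - m) ^ (1 - μ)) / ((1 - μ) * c) := by
  have hμ0 : 0 < 1 - μ := sub_pos.2 hμ
  have hsub : Icc s t ⊆ Ici 0 := fun u hu => hs.trans hu.1
  have hmin' : ∀ u ∈ Ico s t, ∀ v ∈ Icc u t, m ≤ L (θ v) := fun u hu v hv =>
    hmin v ⟨hu.1.trans hv.1, hv.2⟩
  have key := image_norm_le_of_norm_deriv_right_le_deriv_boundary'
    (f := fun u => θ u - θ s) (f' := fun u => -gradient L (θ u))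
    (B := fun u => ((L (θ s) - m) ^ (1 - μ) - (L (θ u) - m) ^ (1 - μ)) / ((1 - μ) * c))
    (B' := fun u => ‖gradient L (θ u)‖ ^ 2 / (c * (L (θ u) - m) ^ μ))
    ((hθ.continuousOn.mono hsub).sub continuousOn_const)
    (fun u hu => ((hθ u (hs.trans hu.1)).mono (Ici_subset_Ici.2 (hs.trans hu.1))).sub_const _)
    (by simp)
    ((continuousOn_const.sub (((hL.continuous.comp_continuousOn (hθ.continuousOn.mono hsub)).sub
      continuousOn_const).rpow_const fun _ _ => Or.inr hμ0.le)).div_const _)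
    (fun u hu => (((hθ.hasDerivWithinAt_rpow_energy hL (hs.trans hu.1) hu.2
      (hmin' u hu)).const_sub _).div_const _).congr_deriv (by field_simp))
    (fun u hu => by
      rcases (sub_nonneg.2 (hmin u (Ico_subset_Icc_self hu))).lt_or_eq with hpos | hzero
      · have hlow : 0 < c * (L (θ u) - m) ^ μ := mul_pos hc (Real.rpow_pos_of_pos hpos μ)
        have hup := hloj u (Ico_subset_Icc_self hu)
        rw [norm_neg, le_div_iff₀ hlow]
        nlinarith
      · simp [hθ.gradient_eq_zero_of_energy_eq_min hL (hs.trans hu.1) hu.2 (hmin' u hu)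
          (sub_eq_zero.1 hzero.symm)])
  simpa using key (right_mem_Icc.2 hst)

theorem norm_sub_le_rpow_of_lojasiewicz (hθ : IsGradientFlow L θ) (hL : Differentiable ℝ L)
    {m c μ s t : ℝ} (hc : 0 < c) (hμ : μ < 1) (hs : 0 ≤ s) (hst : s ≤ t)
    (hmin : ∀ u ∈ Icc s t, m ≤ L (θ u))
    (hloj : ∀ u ∈ Icc s t, c * (L (θ u) - m) ^ μ ≤ ‖gradient L (θ u)‖) :
    ‖θ t - θ s‖ ≤ (L (θ s) - m) ^ (1 - μ) / ((1 - μ) * c) :=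
  (hθ.norm_sub_le_of_lojasiewicz hL hc hμ hs hst hmin hloj).trans <|
    div_le_div_of_nonneg_right
      (sub_le_self _ (Real.rpow_nonneg (sub_nonneg.2 (hmin t (right_mem_Icc.2 hst))) _))
      (mul_pos (sub_pos.2 hμ) hc).le

theorem exists_tendsto_of_lojasiewicz (hθ : IsGradientFlow L θ) (hL : Differentiable ℝ L)
    {m c μ : ℝ} (hc : 0 < c) (hμ : μ < 1) (hmin : ∀ t, 0 ≤ t → m ≤ L (θ t))
    (hloj : ∀ t, 0 ≤ t → c * (L (θ t) - m) ^ μ ≤ ‖gradient L (θ t)‖) :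
    ∃ θinf, Tendsto θ atTop (𝓝 θinf) := by
  refine cauchySeq_tendsto_of_complete <| cauchySeq_of_dist_le_sub (s₀ := 0)
    (φ := fun t => (L (θ t) - m) ^ (1 - μ) / ((1 - μ) * c)) ⟨0, ?_⟩ fun s t hs hst => ?_
  · rintro _ ⟨t, ht, rfl⟩
    exact div_nonneg (Real.rpow_nonneg (sub_nonneg.2 (hmin t ht)) _) (mul_pos (sub_pos.2 hμ) hc).le
  · rw [dist_comm, dist_eq_norm, ← sub_div]
    exact hθ.norm_sub_le_of_lojasiewicz hL hc hμ hs hst (fun u hu => hmin u (hs.trans hu.1))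
      fun u hu => hloj u (hs.trans hu.1)

end IsGradientFlow

end GradientFlow

/-- Łojasiewicz convergence of gradient flow near a local minimizer: if on
the ball `{‖θ − θ̄‖ ≤ r}` one has `L(θ) ≥ L(θ̄)`, the gradient of `L` is `β`-Lipschitz, and
the Łojasiewicz inequality `‖∇L(θ)‖ ≥ c (L(θ) − L(θ̄))^μ` holds with `μ ∈ [1/2, 1)`, then
there are `δ, C > 0` such that every gradient-flow trajectory starting within `δ` of `θ̄`
converges to some `θ_∞` with `‖θ_∞ − θ̄‖ ≤ C ‖θ(0) − θ̄‖^{2(1−μ)}`. -/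
theorem stmt19 {D : ℕ} (L : EuclideanSpace ℝ (Fin D) → ℝ) (hL : ContDiff ℝ 1 L)
    (θbar : EuclideanSpace ℝ (Fin D)) (c r β : ℝ) (hc : 0 < c) (hr : 0 < r) (hβ : 0 < β)
    (μ : ℝ) (hμ₁ : 1 / 2 ≤ μ) (hμ₂ : μ < 1)
    (hmin : ∀ θ : EuclideanSpace ℝ (Fin D), ‖θ - θbar‖ ≤ r → L θbar ≤ L θ)
    (hlip : ∀ θ₁ θ₂ : EuclideanSpace ℝ (Fin D), ‖θ₁ - θbar‖ ≤ r → ‖θ₂ - θbar‖ ≤ r →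
      ‖gradient L θ₁ - gradient L θ₂‖ ≤ β * ‖θ₁ - θ₂‖)
    (hloj : ∀ θ : EuclideanSpace ℝ (Fin D), ‖θ - θbar‖ ≤ r →
      c * (L θ - L θbar) ^ μ ≤ ‖gradient L θ‖) :
    ∃ δ > (0 : ℝ), ∃ C > (0 : ℝ),
      ∀ θ : ℝ → EuclideanSpace ℝ (Fin D),
        (∀ t ∈ Set.Ici (0 : ℝ),
          HasDerivWithinAt θ (-(gradient L (θ t))) (Set.Ici (0 : ℝ)) t) →
        ‖θ 0 - θbar‖ ≤ δ →
        ∃ θinf : EuclideanSpace ℝ (Fin D),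
          Tendsto θ atTop (𝓝 θinf) ∧
          ‖θinf - θbar‖ ≤ C * ‖θ 0 - θbar‖ ^ (2 * (1 - μ)) := by
  have hLd : Differentiable ℝ L := hL.differentiable one_ne_zero
  set C := 1 + β ^ (1 - μ) / ((1 - μ) * c)
  have hC : 1 ≤ C := le_add_of_nonneg_right (div_nonneg (by positivity) (by nlinarith))
  refine ⟨min 1 ((r / (2 * C)) ^ (2 * (1 - μ))⁻¹), (by positivity), C, (by positivity),
    fun θ hθ hδ => ?_⟩
  replace hθ : IsGradientFlow L θ := hθ
  set a := ‖θ 0 - θbar‖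
  set b := a ^ (2 * (1 - μ))
  have hbr : 2 * C * b ≤ r := by
    have := (Real.le_rpow_inv_iff_of_pos (norm_nonneg _) (by positivity) (by linarith)).1
      (hδ.trans (min_le_right _ _))
    rwa [le_div_iff₀ (by positivity), mul_comm] at this
  have hab : a ≤ b :=
    Real.self_le_rpow_of_le_one (norm_nonneg _) (hδ.trans (min_le_left _ _)) (by linarith)
  have hbC : b ≤ C * b := le_mul_of_one_le_left (by positivity) hC
  have hstart : (L (θ 0) - L θbar) ^ (1 - μ) ≤ β ^ (1 - μ) * b :=
    rpow_sub_le_of_isMinOn_of_lipschitz_gradient hLd hr hβ.le (by linarith)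
      (fun y hy => hmin y (mem_closedBall_iff_norm.1 hy))
      (fun y hy => hlip y θbar (mem_closedBall_iff_norm.1 hy) (by simp [hr.le]))
      (mem_closedBall_iff_norm.2 (by linarith))
  have hball : ∀ t, 0 ≤ t → ‖θ t - θbar‖ ≤ C * b := by
    refine fun t ht => (hθ.continuousOn.sub continuousOn_const).norm.le_of_bootstrap
      (by linarith) (show a < r by linarith) (fun t ht hball => ?_) ht
    calc ‖θ t - θbar‖ ≤ ‖θ t - θ 0‖ + a := norm_sub_le_norm_sub_add_norm_sub _ _ _
      _ ≤ (L (θ 0) - L θbar) ^ (1 - μ) / ((1 - μ) * c) + b := by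
          gcongr
          exact hθ.norm_sub_le_rpow_of_lojasiewicz hLd hc hμ₂ le_rfl ht
            (fun u hu => hmin _ (hball u hu)) fun u hu => hloj _ (hball u hu)
      _ ≤ β ^ (1 - μ) * b / ((1 - μ) * c) + b := by gcongr
      _ = C * b := by ring
  have hball' : ∀ t, 0 ≤ t → ‖θ t - θbar‖ ≤ r := fun t ht => (hball t ht).trans (by linarith)
  obtain ⟨θinf, hlim⟩ := hθ.exists_tendsto_of_lojasiewicz hLd hc hμ₂
    (fun t ht => hmin _ (hball' t ht)) fun t ht => hloj _ (hball' t ht)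
  exact ⟨θinf, hlim, le_of_tendsto (hlim.sub_const θbar).norm (eventually_atTop.2 ⟨0, hball⟩)⟩
end
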